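/- arXiv:math-ph/0512068 — 6 statements merged into one kernel-verified Lean document; each statement's English description precedes it below -/
import Mathlib

section
/- Every nontrivial element A of SL(2,C) has at least one and at most two square roots in SL(2,C) up to sign; moreover, if the image of A in the restricted Lorentz group satisfies μ^2 = 1 with μ ≠ 1, then μ has exactly two square roots ν₊, ν₋ in the restricted Lorentz group, and ν₊ν₋ = 1. -/
/-!
Cayley–Hamilton in `SL(2)` reads `N ^ 2 = (trace N) • N - 1`, so a square root `N` of `B`
satisfies `(trace N) • N = B + 1` and `(trace N) ^ 2 = trace B + 2`. Hence for `B ≠ -1` the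
square roots of `B` are `±(B + 1) / t` with `t ^ 2 = trace B + 2`, and over `ℂ` they exist as
soon as `trace B ≠ -2`.

A square root of `Λ A` in `PSL(2, ℂ)` is the image of a square root of `A` or of `-A`. For
`Λ A ≠ 1` each of the two contributes at most one element, and at least one contributes
because `trace A` and `trace (-A)` are not both `-2`. If moreover `(Λ A) ^ 2 = 1`, then
`(Λ A)⁻¹ = Λ A`, so with `ν` also `ν⁻¹` is a square root, and `ν⁻¹ ≠ ν` since `ν ^ 2 ≠ 1`.
-/

/-- The group `SL(2,ℂ)`. -/
abbrev SL2C := Matrix.SpecialLinearGroup (Fin 2) ℂ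

/-- The restricted Lorentz group, realized as `SL(2,ℂ)/{±1} = PSL(2,ℂ)`, the image of
`SL(2,ℂ)` under the standard 2-to-1 covering homomorphism with kernel `{±1}` (the center). -/
abbrev L1 := SL2C ⧸ Subgroup.center SL2C

/-- The covering homomorphism `Λ : SL(2,ℂ) → L₁`. -/
abbrev Λ : SL2C →* L1 := QuotientGroup.mk' (Subgroup.center SL2C)

open scoped MatrixGroups

theorem Set.Subsingleton.eq_or_eq_or_eq_of_mem_union {α : Type*} {s t : Set α}
    (hs : s.Subsingleton) (ht : t.Subsingleton) {a b c : α}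
    (ha : a ∈ s ∪ t) (hb : b ∈ s ∪ t) (hc : c ∈ s ∪ t) : a = b ∨ a = c ∨ b = c := by
  rcases ha with ha | ha <;> rcases hb with hb | hb <;> rcases hc with hc | hc
  all_goals first
    | exact .inl (hs ha hb) | exact .inl (ht ha hb)
    | exact .inr (.inl (hs ha hc)) | exact .inr (.inl (ht ha hc))
    | exact .inr (.inr (hs hb hc)) | exact .inr (.inr (ht hb hc))

theorem exists_sq_eq_pair_of_sq_eq_one {G : Type*} [Group G] {μ : G} (hμ : μ ≠ 1)
    (hμ2 : μ ^ 2 = 1) (hex : ∃ ν : G, ν ^ 2 = μ)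
    (hle : ∀ ν₁ ν₂ ν₃ : G, ν₁ ^ 2 = μ → ν₂ ^ 2 = μ → ν₃ ^ 2 = μ → ν₁ = ν₂ ∨ ν₁ = ν₃ ∨ ν₂ = ν₃) :
    ∃ νp νm : G, νp ^ 2 = μ ∧ νm ^ 2 = μ ∧ νp ≠ νm ∧
      (∀ ν : G, ν ^ 2 = μ → ν = νp ∨ ν = νm) ∧ νp * νm = 1 := by
  obtain ⟨ν, hν⟩ := hex
  have hν_inv : ν⁻¹ ^ 2 = μ := by
    rw [inv_pow, hν]
    exact inv_eq_of_mul_eq_one_right (by rw [← sq, hμ2])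
  have hne : ν ≠ ν⁻¹ := fun h => hμ (by rw [← hν, sq, mul_eq_one_iff_eq_inv]; exact h)
  refine ⟨ν, ν⁻¹, hν, hν_inv, hne, fun ν' hν' => ?_, mul_inv_cancel ν⟩
  rcases hle ν' ν ν⁻¹ hν' hν hν_inv with h | h | h
  exacts [.inl h, .inr h, absurd h hne]

namespace Matrix

variable {R : Type*} [CommRing R]

theorem sq_fin_two_eq_trace_smul_sub_det_smul (M : Matrix (Fin 2) (Fin 2) R) :
    M ^ 2 = M.trace • M - M.det • 1 := by
  ext i j
  fin_cases i <;> fin_cases j <;> simp [sq, mul_apply, trace_fin_two, det_fin_two] <;> ring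

theorem det_fin_two_add_one (M : Matrix (Fin 2) (Fin 2) R) :
    (M + 1).det = M.det + M.trace + 1 := by
  simp [det_fin_two, trace_fin_two]; ring

namespace SpecialLinearGroup

theorem trace_smul_eq_sq_add_one (N : SL(2, R)) :
    (N : Matrix (Fin 2) (Fin 2) R).trace • (N : Matrix (Fin 2) (Fin 2) R) = ↑(N ^ 2) + 1 := by
  rw [coe_pow, sq_fin_two_eq_trace_smul_sub_det_smul, N.det_coe, one_smul, sub_add_cancel]

theorem trace_sq_eq_trace_sq_add_two (N : SL(2, R)) :
    (N : Matrix (Fin 2) (Fin 2) R).trace ^ 2 = (↑(N ^ 2) : Matrix (Fin 2) (Fin 2) R).trace + 2 := by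
  have := congrArg trace (trace_smul_eq_sq_add_one N)
  rw [trace_smul, smul_eq_mul, ← sq, trace_add, trace_one, Fintype.card_fin] at this
  exact_mod_cast this

theorem trace_ne_zero_of_sq_ne_neg_one {N : SL(2, R)} (hN : N ^ 2 ≠ -1) :
    (N : Matrix (Fin 2) (Fin 2) R).trace ≠ 0 := by
  intro h
  have := trace_smul_eq_sq_add_one N
  rw [h, zero_smul, eq_comm, add_eq_zero_iff_eq_neg] at this
  exact hN (Subtype.ext (by rw [this, coe_neg, coe_one]))

theorem eq_or_eq_neg_of_sq_eq_sq [NoZeroDivisors R] {N M : SL(2, R)} (h : M ^ 2 = N ^ 2)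
    (hN : N ^ 2 ≠ -1) : M = N ∨ M = -N := by
  have htN := trace_ne_zero_of_sq_ne_neg_one hN
  have hsmul : (M : Matrix (Fin 2) (Fin 2) R).trace • (M : Matrix (Fin 2) (Fin 2) R) =
      (N : Matrix (Fin 2) (Fin 2) R).trace • (N : Matrix (Fin 2) (Fin 2) R) := by
    rw [trace_smul_eq_sq_add_one, trace_smul_eq_sq_add_one, h]
  have htr : (M : Matrix (Fin 2) (Fin 2) R).trace ^ 2 =
      (N : Matrix (Fin 2) (Fin 2) R).trace ^ 2 := by
    rw [trace_sq_eq_trace_sq_add_two, trace_sq_eq_trace_sq_add_two, h]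
  rcases sq_eq_sq_iff_eq_or_eq_neg.mp htr with htr | htr
  · rw [htr] at hsmul
    exact .inl (Subtype.ext (smul_right_injective _ htN hsmul))
  · rw [htr, neg_smul, ← smul_neg] at hsmul
    exact .inr (Subtype.ext (by rw [coe_neg, ← smul_right_injective _ htN hsmul, neg_neg]))

theorem exists_sq_eq_of_trace_add_two_eq_sq {K : Type*} [Field K] {A : SL(2, K)} {t : K}
    (ht : (A : Matrix (Fin 2) (Fin 2) K).trace + 2 = t ^ 2) (ht0 : t ≠ 0) :
    ∃ N : SL(2, K), N ^ 2 = A := by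
  set a := (A : Matrix (Fin 2) (Fin 2) K)
  have hdet : (t⁻¹ • (a + 1)).det = 1 := by
    have : (a + 1).det = t ^ 2 := by
      rw [det_fin_two_add_one, A.det_coe]; linear_combination ht
    simp only [det_smul, this, Fintype.card_fin]
    field_simp
  have hsq : (a + 1) ^ 2 = t ^ 2 • a := by
    have hA : a.trace • a = a ^ 2 + 1 := by rw [trace_smul_eq_sq_add_one, coe_pow]
    rw [← ht, add_smul, hA, two_smul, (Commute.one_right a).add_sq, mul_one, two_mul, one_pow]
    abel
  refine ⟨⟨_, hdet⟩, Subtype.ext ?_⟩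
  change (t⁻¹ • (a + 1)) ^ 2 = a
  rw [smul_pow, hsq, smul_smul, inv_pow, inv_mul_cancel₀ (pow_ne_zero 2 ht0), one_smul]

theorem exists_sq_eq_or_exists_sq_eq_neg {K : Type*} [Field K] [IsAlgClosed K] [NeZero (2 : K)]
    (A : SL(2, K)) : (∃ N : SL(2, K), N ^ 2 = A) ∨ ∃ N : SL(2, K), N ^ 2 = -A := by
  obtain ⟨t, ht⟩ := IsAlgClosed.exists_pow_nat_eq ((A : Matrix (Fin 2) (Fin 2) K).trace + 2) two_pos
  by_cases ht0 : t = 0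
  · right
    obtain ⟨s, hs⟩ := IsAlgClosed.exists_pow_nat_eq
      (((-A : SL(2, K)) : Matrix (Fin 2) (Fin 2) K).trace + 2) two_pos
    refine exists_sq_eq_of_trace_add_two_eq_sq hs.symm ?_
    rintro rfl
    rw [coe_neg, trace_neg] at hs
    subst ht0
    have : (2 : K) * 2 = 0 := by linear_combination -ht - hs
    exact two_ne_zero (mul_self_eq_zero.mp this)
  · exact .inl (exists_sq_eq_of_trace_add_two_eq_sq ht.symm ht0)

theorem mem_center_iff_eq_one_or_eq_neg_one [NoZeroDivisors R] {A : SL(2, R)} :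
    A ∈ Subgroup.center SL(2, R) ↔ A = 1 ∨ A = -1 := by
  rw [mem_center_iff, Fintype.card_fin]
  constructor
  · rintro ⟨r, hr, hA⟩
    rcases sq_eq_one_iff.mp hr with rfl | rfl
    · exact .inl (Subtype.ext (by rw [← hA]; simp))
    · exact .inr (Subtype.ext (by rw [← hA, map_neg, map_one, coe_neg, coe_one]))
  · rintro (rfl | rfl)
    · exact ⟨1, one_pow 2, by simp⟩
    · exact ⟨-1, by norm_num, by rw [map_neg, map_one, coe_neg, coe_one]⟩

end SpecialLinearGroup

namespace ProjectiveSpecialLinearGroup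

variable [NoZeroDivisors R]

theorem mk_eq_one_iff {N : SL(2, R)} : (N : PSL(2, R)) = 1 ↔ N = 1 ∨ N = -1 := by
  rw [QuotientGroup.eq_one_iff, SpecialLinearGroup.mem_center_iff_eq_one_or_eq_neg_one]

theorem mk_eq_mk_iff {N M : SL(2, R)} : (N : PSL(2, R)) = M ↔ N = M ∨ N = -M := by
  rw [QuotientGroup.eq, SpecialLinearGroup.mem_center_iff_eq_one_or_eq_neg_one, inv_mul_eq_one, inv_mul_eq_iff_eq_mul,
    mul_neg_one, eq_comm (a := M), neg_eq_iff_eq_neg]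

theorem mem_union_of_sq_eq_mk {ν : PSL(2, R)} {A : SL(2, R)} (h : ν ^ 2 = A) :
    ν ∈ ((↑) : SL(2, R) → PSL(2, R)) '' {N | N ^ 2 = A} ∪ (↑) '' {N | N ^ 2 = -A} := by
  obtain ⟨N, rfl⟩ := QuotientGroup.mk_surjective ν
  rw [← QuotientGroup.mk_pow, mk_eq_mk_iff] at h
  rcases h with h | h
  exacts [.inl ⟨N, h, rfl⟩, .inr ⟨N, h, rfl⟩]

theorem subsingleton_mk_image_sq_eq {B : SL(2, R)} (hB : B ≠ -1) :
    (((↑) : SL(2, R) → PSL(2, R)) '' {N | N ^ 2 = B}).Subsingleton := by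
  rintro _ ⟨N, hN, rfl⟩ _ ⟨M, hM, rfl⟩
  exact mk_eq_mk_iff.mpr (SpecialLinearGroup.eq_or_eq_neg_of_sq_eq_sq (hN.trans hM.symm) (hM ▸ hB))

theorem eq_or_eq_or_eq_of_sq_eq_mk {A : SL(2, R)} (hA : (A : PSL(2, R)) ≠ 1)
    {ν₁ ν₂ ν₃ : PSL(2, R)} (h₁ : ν₁ ^ 2 = A) (h₂ : ν₂ ^ 2 = A) (h₃ : ν₃ ^ 2 = A) :
    ν₁ = ν₂ ∨ ν₁ = ν₃ ∨ ν₂ = ν₃ := by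
  rw [Ne, mk_eq_one_iff, not_or] at hA
  have hA' : -A ≠ -1 := fun h => hA.1 (neg_inj.mp h)
  exact (subsingleton_mk_image_sq_eq hA.2).eq_or_eq_or_eq_of_mem_union
    (subsingleton_mk_image_sq_eq hA') (mem_union_of_sq_eq_mk h₁) (mem_union_of_sq_eq_mk h₂)
    (mem_union_of_sq_eq_mk h₃)

theorem exists_sq_eq_mk {K : Type*} [Field K] [IsAlgClosed K] [NeZero (2 : K)] (A : SL(2, K)) :
    ∃ ν : PSL(2, K), ν ^ 2 = A := by
  rcases SpecialLinearGroup.exists_sq_eq_or_exists_sq_eq_neg A with ⟨N, hN⟩ | ⟨N, hN⟩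
  · exact ⟨N, by rw [← QuotientGroup.mk_pow, hN]⟩
  · exact ⟨N, by rw [← QuotientGroup.mk_pow, hN, mk_eq_mk_iff]; exact .inr rfl⟩

end ProjectiveSpecialLinearGroup

end Matrix

/-- Every nontrivial element `A` of `SL(2,ℂ)` has at least one and at most two square
roots up to sign (i.e. its image `Λ A` in the restricted Lorentz group has at least one
and at most two square roots there); moreover, if `μ = Λ A` satisfies `μ² = 1` with
`μ ≠ 1`, then `μ` has exactly two square roots `ν₊, ν₋` in the restricted Lorentz
group, and `ν₊ν₋ = 1`. -/
theorem square_roots_in_L1 :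
    (∀ A : SL2C, Λ A ≠ 1 →
      (∃ ν : L1, ν ^ 2 = Λ A) ∧
      (∀ ν₁ ν₂ ν₃ : L1, ν₁ ^ 2 = Λ A → ν₂ ^ 2 = Λ A → ν₃ ^ 2 = Λ A →
        ν₁ = ν₂ ∨ ν₁ = ν₃ ∨ ν₂ = ν₃)) ∧
    (∀ A : SL2C, Λ A ≠ 1 → (Λ A) ^ 2 = 1 →
      ∃ νp νm : L1, νp ^ 2 = Λ A ∧ νm ^ 2 = Λ A ∧ νp ≠ νm ∧
        (∀ ν : L1, ν ^ 2 = Λ A → ν = νp ∨ ν = νm) ∧ νp * νm = 1) := by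
  have at_most_two (A : SL2C) (hA : Λ A ≠ 1) (ν₁ ν₂ ν₃ : L1) :
      ν₁ ^ 2 = Λ A → ν₂ ^ 2 = Λ A → ν₃ ^ 2 = Λ A → ν₁ = ν₂ ∨ ν₁ = ν₃ ∨ ν₂ = ν₃ :=
    Matrix.ProjectiveSpecialLinearGroup.eq_or_eq_or_eq_of_sq_eq_mk hA
  have exists_root (A : SL2C) : ∃ ν : L1, ν ^ 2 = Λ A :=
    Matrix.ProjectiveSpecialLinearGroup.exists_sq_eq_mk A
  exact ⟨fun A hA => ⟨exists_root A, at_most_two A hA⟩, fun A hA hA2 =>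
    exists_sq_eq_pair_of_sq_eq_one hA hA2 (exists_root A) (at_most_two A hA)⟩
end

section
/- For an element μ of the restricted Lorentz group, the centralizer of μ in the restricted Lorentz group is an abelian group if and only if μ² ≠ 1. -/
open Matrix Polynomial

theorem cross_eq_zero_of_cross_eq_zero_of_ne_zero {F : Type*} [Field F] {u v w : Fin 3 → F}
    (hu : u ≠ 0) (hv : u ⨯₃ v = 0) (hw : u ⨯₃ w = 0) : v ⨯₃ w = 0 := by
  have : ¬LinearIndependent F ![u, v] := by
    rwa [← crossProduct_ne_zero_iff_linearIndependent, not_not]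
  rw [LinearIndependent.pair_iff' hu, not_forall_not] at this
  obtain ⟨a, rfl⟩ := this
  rw [map_smul, LinearMap.smul_apply, hw, smul_zero]

namespace Matrix

section CommRing

variable {R : Type*} [CommRing R]

def crossVec (A : Matrix (Fin 2) (Fin 2) R) : Fin 3 → R :=
  ![A 0 1, A 1 0, A 0 0 - A 1 1]

theorem commute_iff_crossVec_cross_eq_zero {A B : Matrix (Fin 2) (Fin 2) R} :
    Commute A B ↔ crossVec A ⨯₃ crossVec B = 0 := by
  simp only [Commute, SemiconjBy, ← Matrix.ext_iff, Fin.forall_fin_two, crossVec, cross_apply,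
    mul_apply, Fin.sum_univ_two, cons_eq_zero_iff, zero_empty, and_true, sub_eq_zero,
    cons_val_zero, cons_val_one, cons_val_two, vecHead, vecTail, Function.comp_apply,
    Fin.succ_zero_eq_one]
  constructor
  · rintro ⟨⟨h00, h01⟩, h10, -⟩
    exact ⟨by linear_combination h10, by linear_combination h01, by linear_combination h00⟩
  · rintro ⟨h0, h1, h2⟩
    exact ⟨⟨by linear_combination h2, by linear_combination h1⟩, by linear_combination h0,
      by linear_combination -h2⟩

theorem mul_self_eq_trace_smul_sub_det_smul [Nontrivial R] (M : Matrix (Fin 2) (Fin 2) R) :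
    M * M = M.trace • M - M.det • 1 := by
  have h := M.aeval_self_charpoly
  rw [charpoly_fin_two] at h
  simp only [sq, map_add, aeval_sub, map_mul, aeval_X, aeval_C, Algebra.algebraMap_eq_smul_one,
    Algebra.smul_mul_assoc, one_mul] at h
  rw [← sub_eq_zero, ← h]
  abel

theorem det_smul_one_add_smul (α β : R) (M : Matrix (Fin 2) (Fin 2) R) :
    (α • 1 + β • M).det = α ^ 2 + α * β * M.trace + β ^ 2 * M.det := by
  simp only [det_fin_two, trace_fin_two, Matrix.add_apply, Matrix.smul_apply, smul_eq_mul,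
    one_apply_eq, one_apply_ne zero_ne_one, one_apply_ne one_ne_zero]
  ring

theorem mul_self_eq_one_of_crossVec_eq_zero {M : Matrix (Fin 2) (Fin 2) R} (hdet : M.det = 1)
    (hM : crossVec M = 0) : M * M = 1 := by
  simp only [crossVec, cons_eq_zero_iff, zero_empty, and_true, sub_eq_zero] at hM
  obtain ⟨hb, hc, hd⟩ := hM
  rw [det_fin_two, hb, hd, zero_mul, sub_zero] at hdet
  rw [eta_fin_two M, hb, hc, hd, mul_fin_two, one_fin_two]
  simp only [mul_zero, zero_mul, add_zero, zero_add, hdet]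

theorem mul_self_eq_neg_one_of_trace_eq_zero [Nontrivial R] {M : Matrix (Fin 2) (Fin 2) R}
    (hdet : M.det = 1) (htr : M.trace = 0) : M * M = -1 := by
  rw [mul_self_eq_trace_smul_sub_det_smul, htr, hdet, zero_smul, one_smul, zero_sub]

end CommRing

section Field

variable {K : Type*} [Field K] {M : Matrix (Fin 2) (Fin 2) K}

theorem commute_of_crossVec_ne_zero {A B : Matrix (Fin 2) (Fin 2) K} (hM : crossVec M ≠ 0)
    (hA : Commute A M) (hB : Commute B M) : Commute A B :=
  commute_iff_crossVec_cross_eq_zero.2 <| cross_eq_zero_of_cross_eq_zero_of_ne_zero hM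
    (commute_iff_crossVec_cross_eq_zero.1 hA.symm) (commute_iff_crossVec_cross_eq_zero.1 hB.symm)

theorem trace_eq_zero_of_mul_self_eq_neg_one (hdet : M.det = 1) (hM : M * M = -1) :
    M.trace = 0 := by
  have h := mul_self_eq_trace_smul_sub_det_smul M
  rw [hM, hdet, one_smul, eq_sub_iff_add_eq, neg_add_cancel, eq_comm, smul_eq_zero] at h
  refine h.resolve_right ?_
  rintro rfl
  simp at hdet

variable [NeZero (2 : K)]

theorem trace_eq_zero_of_mul_eq_neg_mul {N : Matrix (Fin 2) (Fin 2) K} (hN : IsUnit N)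
    (hNM : N * M = -(M * N)) : M.trace = 0 := by
  obtain ⟨u, rfl⟩ := hN
  have h : (u * M * u⁻¹ : Matrix (Fin 2) (Fin 2) K).trace = -M.trace := by
    rw [hNM, neg_mul, mul_assoc, Units.mul_inv, mul_one, trace_neg]
  rw [trace_units_conj] at h
  have h' : (2 : K) * M.trace = 0 := by linear_combination h
  exact (mul_eq_zero.1 h').resolve_left two_ne_zero

theorem commute_of_mul_self_eq_one (hdet : M.det = 1) (hM : M * M = 1)
    (A : Matrix (Fin 2) (Fin 2) K) : Commute A M := by
  have h := mul_self_eq_trace_smul_sub_det_smul M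
  rw [hM, hdet, one_smul, eq_sub_iff_add_eq, ← two_smul K, eq_comm] at h
  have htr : M.trace ≠ 0 := by
    rintro h0
    rw [h0, zero_smul] at h
    exact smul_ne_zero two_ne_zero one_ne_zero h.symm
  have hscalar : M = (M.trace⁻¹ * 2) • 1 := by rw [mul_smul, ← h, inv_smul_smul₀ htr]
  rw [hscalar]
  exact (Commute.one_right A).smul_right _

end Field

theorem exists_det_eq_one_mul_eq_neg_mul {M : Matrix (Fin 2) (Fin 2) ℂ} (hdet : M.det = 1)
    (htr : M.trace = 0) : ∃ N : Matrix (Fin 2) (Fin 2) ℂ, N.det = 1 ∧ N * M = -(M * N) := by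
  -- For traceless `M` and `N`, `M * N + N * M = tr (M * N) • 1`: the witnesses below are
  -- traceless with `tr (M * N) = 0`.
  obtain ⟨a, b, c, d, rfl⟩ : ∃ a b c d, M = !![a, b; c, d] := ⟨_, _, _, _, eta_fin_two M⟩
  rw [trace_fin_two_of] at htr
  rw [det_fin_two_of] at hdet
  obtain rfl : d = -a := by linear_combination htr
  by_cases hc : c = 0
  · subst hc
    have ha : a ≠ 0 := by rintro rfl; simp at hdet
    refine ⟨!![-b, -(1 + b ^ 2) / (2 * a); 2 * a, b], ?_, ?_⟩
    · rw [det_fin_two_of]; field_simp; ring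
    · ext i j; fin_cases i <;> fin_cases j <;> simp [mul_apply] <;> field_simp <;> ring
  · refine ⟨!![-Complex.I, 2 * a * Complex.I / c; 0, Complex.I], ?_, ?_⟩
    · rw [det_fin_two_of]; simp
    · ext i j; fin_cases i <;> fin_cases j <;> simp [mul_apply] <;> field_simp <;> ring

end Matrix

theorem Matrix.SpecialLinearGroup.mem_center_iff_fin_two {R : Type*} [CommRing R]
    [NoZeroDivisors R] {g : SpecialLinearGroup (Fin 2) R} :
    g ∈ Subgroup.center (SpecialLinearGroup (Fin 2) R) ↔ g = 1 ∨ g = -1 := by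
  rw [mem_center_iff, Fintype.card_fin]
  constructor
  · rintro ⟨r, hr, h⟩
    rcases sq_eq_one_iff.1 hr with rfl | rfl
    · exact .inl (Subtype.ext (by rw [← h, map_one, coe_one]))
    · exact .inr (Subtype.ext (by rw [← h, map_neg, map_one, coe_neg, coe_one]))
  · rintro (rfl | rfl)
    · exact ⟨1, one_pow 2, by rw [map_one, coe_one]⟩
    · exact ⟨-1, by simp, by rw [map_neg, map_one, coe_neg, coe_one]⟩

namespace L1

local notation "Mat₂" => Matrix (Fin 2) (Fin 2) ℂ

theorem mk_eq_mk_iff {A B : SL2C} : (A : L1) = B ↔ A = B ∨ A = -B := by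
  rw [QuotientGroup.eq, SpecialLinearGroup.mem_center_iff_fin_two, inv_mul_eq_one,
    inv_mul_eq_iff_eq_mul, mul_neg_one, eq_comm (a := B), neg_eq_iff_eq_neg]

theorem mk_commute_iff {A B : SL2C} :
    Commute (A : L1) B ↔ Commute (A : Mat₂) B ∨ (A : Mat₂) * B = -(B * A) := by
  rw [Commute, SemiconjBy, ← QuotientGroup.mk_mul, ← QuotientGroup.mk_mul, mk_eq_mk_iff]
  exact or_congr Subtype.ext_iff Subtype.ext_iff

theorem mk_sq_eq_one_iff {M : SL2C} :
    (M : L1) ^ 2 = 1 ↔ (M : Mat₂) * M = 1 ∨ (M : Mat₂) * M = -1 := by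
  rw [← QuotientGroup.mk_pow, ← QuotientGroup.mk_one, mk_eq_mk_iff, sq]
  exact or_congr Subtype.ext_iff Subtype.ext_iff

theorem commute_of_mk_commute {A M : SL2C} (hM : (M : Mat₂) * M ≠ -1)
    (h : Commute (A : L1) M) : Commute (A : Mat₂) M := by
  refine (mk_commute_iff.1 h).resolve_right fun hAM ↦ hM ?_
  have hA : IsUnit (A : Mat₂) := (isUnit_iff_isUnit_det _).2 (by simp)
  exact mul_self_eq_neg_one_of_trace_eq_zero M.2 (trace_eq_zero_of_mul_eq_neg_mul hA hAM)

theorem exists_not_commute_of_trace_eq_zero {M : SL2C} (htr : (M : Mat₂).trace = 0) :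
    ∃ a b : L1, Commute a M ∧ Commute b M ∧ ¬Commute a b := by
  obtain ⟨N, hNdet, hNM⟩ := exists_det_eq_one_mul_eq_neg_mul M.2 htr
  -- `(3/5)² + (4/5)² = 1` makes `P` unimodular, with both coefficients nonzero.
  set P : Mat₂ := (3 / 5 : ℂ) • 1 + (4 / 5 : ℂ) • (M : Mat₂)
  have hPdet : P.det = 1 := by
    rw [det_smul_one_add_smul, htr, M.2]
    norm_num
  have hPM : Commute P M :=
    ((Commute.one_left _).smul_left _).add_left ((Commute.refl _).smul_left _)
  have hsub : P * N - N * P = (8 / 5 : ℂ) • ((M : Mat₂) * N) := by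
    simp only [P, add_mul, mul_add, smul_mul_assoc, mul_smul_comm, one_mul, mul_one, hNM]
    module
  have hadd : P * N + N * P = (6 / 5 : ℂ) • N := by
    simp only [P, add_mul, mul_add, smul_mul_assoc, mul_smul_comm, one_mul, mul_one, hNM]
    module
  refine ⟨QuotientGroup.mk (⟨P, hPdet⟩ : SL2C), QuotientGroup.mk (⟨N, hNdet⟩ : SL2C),
    mk_commute_iff.2 (.inl hPM), mk_commute_iff.2 (.inr hNM), ?_⟩
  intro hPN
  rcases mk_commute_iff.1 hPN with h | h
  · have hMN : (M : Mat₂) * N = 0 := by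
      have h' : (8 / 5 : ℂ) • ((M : Mat₂) * N) = 0 := by
        rw [← hsub]
        exact sub_eq_zero.2 h
      exact (smul_eq_zero.1 h').resolve_left (by norm_num)
    simpa [M.2, hNdet] using congrArg det hMN
  · have hN : N = 0 := by
      have h' : (6 / 5 : ℂ) • N = 0 := by
        rw [← hadd]
        exact add_eq_zero_iff_eq_neg.2 h
      exact (smul_eq_zero.1 h').resolve_left (by norm_num)
    simpa [hNdet] using congrArg det hN

end L1

/-- The centralizer of `μ` in the restricted Lorentz group is abelian
if and only if `μ² ≠ 1`. -/
theorem centralizer_abelian_iff (μ : L1) :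
    (∀ a b : L1, a * μ = μ * a → b * μ = μ * b → a * b = b * a) ↔ μ ^ 2 ≠ 1 := by
  obtain ⟨M, rfl⟩ := QuotientGroup.mk_surjective μ
  rw [Ne, L1.mk_sq_eq_one_iff]
  constructor
  · rintro habel (hM | hM)
    · have hcentral (a : L1) : Commute a M := by
        obtain ⟨A, rfl⟩ := QuotientGroup.mk_surjective a
        exact L1.mk_commute_iff.2 (.inl (commute_of_mul_self_eq_one M.2 hM A))
      obtain ⟨a, b, -, -, hab⟩ := L1.exists_not_commute_of_trace_eq_zero
        (M := ⟨!![0, -1; 1, 0], by simp [det_fin_two_of]⟩) (by simp [trace_fin_two_of])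
      exact hab (habel a b (hcentral a) (hcentral b))
    · obtain ⟨a, b, ha, hb, hab⟩ :=
        L1.exists_not_commute_of_trace_eq_zero (trace_eq_zero_of_mul_self_eq_neg_one M.2 hM)
      exact hab (habel a b ha hb)
  · rintro hsq a b ha hb
    obtain ⟨hM1, hM2⟩ := not_or.1 hsq
    obtain ⟨A, rfl⟩ := QuotientGroup.mk_surjective a
    obtain ⟨B, rfl⟩ := QuotientGroup.mk_surjective b
    have hM : crossVec (M : Matrix (Fin 2) (Fin 2) ℂ) ≠ 0 :=
      fun h ↦ hM1 (mul_self_eq_one_of_crossVec_eq_zero M.2 h)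
    exact L1.mk_commute_iff.2 <| .inl <| commute_of_crossVec_ne_zero hM
      (L1.commute_of_mk_commute hM2 ha) (L1.commute_of_mk_commute hM2 hb)
end

section
/- Every matrix in SL(2,C) conjugate to the Jordan block N₋∞ = [[-1,1],[0,-1]] has no square root in SL(2,C). -/
/-- Every matrix in `SL(2,ℂ)` conjugate to the Jordan block `N₋∞ = [[-1,1],[0,-1]]`
has no square root in `SL(2,ℂ)`. -/
theorem no_square_root_of_conj_jordan (A P : SL2C)
    (hA : (A : Matrix (Fin 2) (Fin 2) ℂ) =
      (P : Matrix (Fin 2) (Fin 2) ℂ) * !![(-1 : ℂ), 1; 0, -1] *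
        ((P⁻¹ : SL2C) : Matrix (Fin 2) (Fin 2) ℂ)) :
    ¬ ∃ B : SL2C, B ^ 2 = A := by
  rintro ⟨B, hB⟩
  have hPinv : ((P⁻¹ : SL2C) : Matrix (Fin 2) (Fin 2) ℂ) * (P : Matrix (Fin 2) (Fin 2) ℂ) = 1 := by
    rw [← Matrix.SpecialLinearGroup.coe_mul, inv_mul_cancel, Matrix.SpecialLinearGroup.coe_one]
  have hBsq : (B : Matrix (Fin 2) (Fin 2) ℂ) ^ 2 = (A : Matrix (Fin 2) (Fin 2) ℂ) := by
    rw [← hB]; rfl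
  have hdet : Matrix.det (B : Matrix (Fin 2) (Fin 2) ℂ) = 1 := B.2
  -- trace of A is -2
  have htr : Matrix.trace (A : Matrix (Fin 2) (Fin 2) ℂ) = -2 := by
    rw [hA, Matrix.trace_mul_cycle, hPinv, Matrix.one_mul]
    simp [Matrix.trace_fin_two]
    norm_num
  set a := (B : Matrix (Fin 2) (Fin 2) ℂ) 0 0 with ha
  set b := (B : Matrix (Fin 2) (Fin 2) ℂ) 0 1 with hb'
  set c := (B : Matrix (Fin 2) (Fin 2) ℂ) 1 0 with hc
  set d := (B : Matrix (Fin 2) (Fin 2) ℂ) 1 1 with hd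
  have hBeta : (B : Matrix (Fin 2) (Fin 2) ℂ) = !![a, b; c, d] := Matrix.eta_fin_two _
  have hdet2 : a * d - b * c = 1 := by
    rw [hBeta] at hdet
    simpa [Matrix.det_fin_two_of] using hdet
  have hsq : !![a * a + b * c, a * b + b * d; c * a + d * c, c * b + d * d] =
      (A : Matrix (Fin 2) (Fin 2) ℂ) := by
    rw [← hBsq, hBeta, pow_two]
    simp [Matrix.mul_fin_two]
  have e00 : a * a + b * c = (A : Matrix (Fin 2) (Fin 2) ℂ) 0 0 := by
    have := congrFun (congrFun hsq 0) 0; simpa using this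
  have e01 : a * b + b * d = (A : Matrix (Fin 2) (Fin 2) ℂ) 0 1 := by
    have := congrFun (congrFun hsq 0) 1; simpa using this
  have e10 : c * a + d * c = (A : Matrix (Fin 2) (Fin 2) ℂ) 1 0 := by
    have := congrFun (congrFun hsq 1) 0; simpa using this
  have e11 : c * b + d * d = (A : Matrix (Fin 2) (Fin 2) ℂ) 1 1 := by
    have := congrFun (congrFun hsq 1) 1; simpa using this
  have htr2 : (A : Matrix (Fin 2) (Fin 2) ℂ) 0 0 + (A : Matrix (Fin 2) (Fin 2) ℂ) 1 1 = -2 := by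
    simpa [Matrix.trace_fin_two] using htr
  have hsumval : a * a + b * c + (c * b + d * d) = -2 := by rw [e00, e11, htr2]
  have hsum : (a + d) ^ 2 = 0 := by linear_combination hsumval + 2 * hdet2
  have hadd : a + d = 0 := by
    have := pow_eq_zero_iff (n := 2) (by norm_num) |>.mp hsum
    exact this
  -- hence A = -1
  have hA00 : (A : Matrix (Fin 2) (Fin 2) ℂ) 0 0 = -1 := by
    rw [← e00]; linear_combination a * hadd - hdet2
  have hA01 : (A : Matrix (Fin 2) (Fin 2) ℂ) 0 1 = 0 := by
    rw [← e01]; linear_combination b * hadd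
  have hA10 : (A : Matrix (Fin 2) (Fin 2) ℂ) 1 0 = 0 := by
    rw [← e10]; linear_combination c * hadd
  have hA11 : (A : Matrix (Fin 2) (Fin 2) ℂ) 1 1 = -1 := by
    rw [← e11]; linear_combination d * hadd - hdet2
  have hAneg : (A : Matrix (Fin 2) (Fin 2) ℂ) = -1 := by
    rw [Matrix.eta_fin_two (A : Matrix (Fin 2) (Fin 2) ℂ), hA00, hA01, hA10, hA11]
    ext i j
    fin_cases i <;> fin_cases j <;> simp
  -- so P * N * P⁻¹ = -1, hence N = -1, contradiction at entry (0,1)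
  have hkey : (P : Matrix (Fin 2) (Fin 2) ℂ) * !![(-1 : ℂ), 1; 0, -1] *
      ((P⁻¹ : SL2C) : Matrix (Fin 2) (Fin 2) ℂ) = -1 := hA.symm.trans hAneg
  have hNeq : !![(-1 : ℂ), 1; 0, -1] = (-1 : Matrix (Fin 2) (Fin 2) ℂ) := by
    calc !![(-1 : ℂ), 1; 0, -1]
        = (((P⁻¹ : SL2C) : Matrix (Fin 2) (Fin 2) ℂ) * (P : Matrix (Fin 2) (Fin 2) ℂ)) *
            !![(-1 : ℂ), 1; 0, -1] *
            (((P⁻¹ : SL2C) : Matrix (Fin 2) (Fin 2) ℂ) * (P : Matrix (Fin 2) (Fin 2) ℂ)) := by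
          rw [hPinv]; simp
      _ = ((P⁻¹ : SL2C) : Matrix (Fin 2) (Fin 2) ℂ) *
            ((P : Matrix (Fin 2) (Fin 2) ℂ) * !![(-1 : ℂ), 1; 0, -1] *
              ((P⁻¹ : SL2C) : Matrix (Fin 2) (Fin 2) ℂ)) * (P : Matrix (Fin 2) (Fin 2) ℂ) := by
          noncomm_ring
      _ = ((P⁻¹ : SL2C) : Matrix (Fin 2) (Fin 2) ℂ) * (-1) * (P : Matrix (Fin 2) (Fin 2) ℂ) := by
          rw [hkey]
      _ = -1 := by rw [mul_neg_one, neg_mul, hPinv]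
  have := congrFun (congrFun hNeq 0) 1
  simp at this
end

section
/- Let x, y, v, w be four linearly independent lightlike vectors in R^{1+3} with x, y, v, w all future-directed, and set α = sqrt((g(x,y)/g(v,w))·(g(x,w)/g(y,v))), β = sqrt((g(x,y)/g(v,w))·(g(y,v)/g(x,w))). Then the plane C spanned by x - αv and y - βw is spacelike, its orthogonal complement is spanned by x + αv and y + βw, and the orthogonal reflection j_C by C satisfies j_C(x) = -αv and j_C(y) = -βw. -/
noncomputable section

/-- Minkowski spacetime ℝ^{1+3}. -/
abbrev V4 : Type := Fin 4 → ℝ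

/-- The Minkowski metric of signature (+,-,-,-). -/
def mg (x y : V4) : ℝ := x 0 * y 0 - x 1 * y 1 - x 2 * y 2 - x 3 * y 3

/-- The distinguished future-directed timelike unit vector. -/
def e0 : V4 := fun i => if i = 0 then 1 else 0

/-- A restricted Lorentz transformation: preserves the metric, has determinant 1,
and preserves the time orientation. -/
def IsRestrictedLorentz (T : V4 →ₗ[ℝ] V4) : Prop :=
  (∀ x y, mg (T x) (T y) = mg x y) ∧ LinearMap.det T = 1 ∧ 0 < (T e0) 0

/-- A two-dimensional spacelike linear subspace. -/
def IsSpacelikePlane (S : Submodule ℝ V4) : Prop :=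
  Module.finrank ℝ S = 2 ∧ ∀ x ∈ S, x ≠ 0 → mg x x < 0

/-- `j` is the orthogonal reflection by the spacelike plane `S`. -/
def IsReflectionBy (S : Submodule ℝ V4) (j : V4 →ₗ[ℝ] V4) : Prop :=
  (∀ x ∈ S, j x = x) ∧ ∀ x, (∀ s ∈ S, mg x s = 0) → j x = -x

private lemma mg_comm (x y : V4) : mg x y = mg y x := by simp only [mg]; ring

private lemma mg_expand (x v y w : V4) (c d : ℝ) :
    mg (x + c • v) (y + d • w)
      = mg x y + d * mg x w + c * mg v y + c * d * mg v w := by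
  simp only [mg, Pi.add_apply, Pi.smul_apply, smul_eq_mul]; ring

private lemma mg_left4 (a b c d e : V4) (p q r s : ℝ) :
    mg (p • a + q • b + r • c + s • d) e
      = p * mg a e + q * mg b e + r * mg c e + s * mg d e := by
  simp only [mg, Pi.add_apply, Pi.smul_apply, smul_eq_mul]; ring

private lemma mg_right2 (z a b : V4) (p q : ℝ) :
    mg z (p • a + q • b) = p * mg z a + q * mg z b := by
  simp only [mg, Pi.add_apply, Pi.smul_apply, smul_eq_mul]; ring

private lemma mg_pair_pair (t u a b : V4) (r s p q : ℝ) :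
    mg (r • t + s • u) (p • a + q • b)
      = r*p * mg t a + r*q * mg t b + s*p * mg u a + s*q * mg u b := by
  simp only [mg, Pi.add_apply, Pi.smul_apply, smul_eq_mul]; ring

private lemma hsub_lemma (p q : V4) (c : ℝ) : p - c • q = p + (-c) • q := by
  rw [neg_smul, ← sub_eq_add_neg]

private lemma zero_of_orth_timelike {t c : V4} (htt : 0 < mg t t)
    (h : mg t c = 0) (hcc : 0 ≤ mg c c) : c = 0 := by
  simp only [mg] at htt h hcc
  have ht0 : 0 < t 0 * t 0 := by
    nlinarith [sq_nonneg (t 1), sq_nonneg (t 2), sq_nonneg (t 3)]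
  have hK : (t 0*c 1 - c 0*t 1)^2 + (t 0*c 2 - c 0*t 2)^2 + (t 0*c 3 - c 0*t 3)^2
      = -((t 0*t 0) * (c 0*c 0 - c 1*c 1 - c 2*c 2 - c 3*c 3))
        - (c 0*c 0) * (t 0*t 0 - t 1*t 1 - t 2*t 2 - t 3*t 3) := by
    linear_combination (2 * t 0 * c 0) * h
  have h0 : c 0 = 0 := by
    have h1 : c 0 * c 0 ≤ 0 := by
      nlinarith [hK, sq_nonneg (t 0 * c 1 - c 0 * t 1), sq_nonneg (t 0 * c 2 - c 0 * t 2),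
        sq_nonneg (t 0 * c 3 - c 0 * t 3), mul_nonneg ht0.le hcc]
    exact mul_self_eq_zero.mp (le_antisymm h1 (mul_self_nonneg _))
  have h123 : c 1 * c 1 + c 2 * c 2 + c 3 * c 3 ≤ 0 := by nlinarith
  have h1 : c 1 = 0 := mul_self_eq_zero.mp (le_antisymm (by nlinarith [mul_self_nonneg (c 2), mul_self_nonneg (c 3)]) (mul_self_nonneg _))
  have h2 : c 2 = 0 := mul_self_eq_zero.mp (le_antisymm (by nlinarith [mul_self_nonneg (c 1), mul_self_nonneg (c 3)]) (mul_self_nonneg _))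
  have h3 : c 3 = 0 := mul_self_eq_zero.mp (le_antisymm (by nlinarith [mul_self_nonneg (c 1), mul_self_nonneg (c 2)]) (mul_self_nonneg _))
  funext i
  fin_cases i <;> simp_all

private lemma mg_pos_of_lightlike {u1 u2 : V4} (h1 : mg u1 u1 = 0) (h2 : mg u2 u2 = 0)
    (h10 : 0 < u1 0) (h20 : 0 < u2 0) (hli : LinearIndependent ℝ ![u1, u2]) :
    0 < mg u1 u2 := by
  by_contra hle
  push_neg at hle
  simp only [mg] at h1 h2 hle
  have key : ∀ i : Fin 4, u2 0 * u1 i - u1 0 * u2 i = 0 := by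
    have e1 : (u2 0 * u1 1 - u1 0 * u2 1) ^ 2 ≤ 0 := by
      nlinarith [sq_nonneg (u2 0 * u1 2 - u1 0 * u2 2), sq_nonneg (u2 0 * u1 3 - u1 0 * u2 3), mul_pos h10 h20]
    have e2 : (u2 0 * u1 2 - u1 0 * u2 2) ^ 2 ≤ 0 := by
      nlinarith [sq_nonneg (u2 0 * u1 1 - u1 0 * u2 1), sq_nonneg (u2 0 * u1 3 - u1 0 * u2 3), mul_pos h10 h20]
    have e3 : (u2 0 * u1 3 - u1 0 * u2 3) ^ 2 ≤ 0 := by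
      nlinarith [sq_nonneg (u2 0 * u1 1 - u1 0 * u2 1), sq_nonneg (u2 0 * u1 2 - u1 0 * u2 2), mul_pos h10 h20]
    intro i
    fin_cases i
    · show u2 0 * u1 0 - u1 0 * u2 0 = 0; ring
    · exact pow_eq_zero_iff (two_ne_zero) |>.mp (le_antisymm e1 (sq_nonneg _))
    · exact pow_eq_zero_iff (two_ne_zero) |>.mp (le_antisymm e2 (sq_nonneg _))
    · exact pow_eq_zero_iff (two_ne_zero) |>.mp (le_antisymm e3 (sq_nonneg _))
  have hz : u2 0 • u1 + (-(u1 0)) • u2 = 0 := by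
    funext i
    have := key i
    simp only [Pi.add_apply, Pi.smul_apply, smul_eq_mul, neg_mul, Pi.zero_apply]
    linarith
  have := (LinearIndependent.pair_iff.mp hli (u2 0) (-(u1 0)) hz).1
  exact absurd this (ne_of_gt h20)

private lemma pair_li' {x y v w p q : V4} (hli : LinearIndependent ℝ ![x, y, v, w])
    (a b : Fin 4) (hab : a ≠ b) (hp : ![x,y,v,w] a = p) (hq : ![x,y,v,w] b = q) :
    LinearIndependent ℝ ![p, q] := by
  have hinj : Function.Injective ![a, b] := by
    intro i j hij
    fin_cases i <;> fin_cases j <;> simp_all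
  have := hli.comp ![a, b] hinj
  have heq : (![x,y,v,w] ∘ ![a, b]) = ![p, q] := by
    funext i; fin_cases i <;> simp_all
  rwa [heq] at this

/-- Given four linearly independent future-directed lightlike vectors `x, y, v, w`,
with `α = √((g(x,y)/g(v,w))·(g(x,w)/g(y,v)))` and `β = √((g(x,y)/g(v,w))·(g(y,v)/g(x,w)))`,
the plane `C` spanned by `x - αv` and `y - βw` is spacelike, its Lorentz-orthogonal
complement is spanned by `x + αv` and `y + βw`, and the orthogonal reflection `j_C`
by `C` satisfies `j_C x = -αv` and `j_C y = -βw`. -/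
theorem reflection_plane_between_lightlike
    (x y v w : V4)
    (hx : mg x x = 0) (hy : mg y y = 0) (hv : mg v v = 0) (hw : mg w w = 0)
    (hx0 : 0 < x 0) (hy0 : 0 < y 0) (hv0 : 0 < v 0) (hw0 : 0 < w 0)
    (hli : LinearIndependent ℝ ![x, y, v, w]) :
    IsSpacelikePlane (Submodule.span ℝ
        {x - Real.sqrt ((mg x y / mg v w) * (mg x w / mg y v)) • v,
         y - Real.sqrt ((mg x y / mg v w) * (mg y v / mg x w)) • w}) ∧
    {z : V4 | ∀ c ∈ Submodule.span ℝ
        {x - Real.sqrt ((mg x y / mg v w) * (mg x w / mg y v)) • v,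
         y - Real.sqrt ((mg x y / mg v w) * (mg y v / mg x w)) • w}, mg z c = 0} =
      ↑(Submodule.span ℝ
        {x + Real.sqrt ((mg x y / mg v w) * (mg x w / mg y v)) • v,
         y + Real.sqrt ((mg x y / mg v w) * (mg y v / mg x w)) • w}) ∧
    ∀ j : V4 →ₗ[ℝ] V4, IsReflectionBy (Submodule.span ℝ
        {x - Real.sqrt ((mg x y / mg v w) * (mg x w / mg y v)) • v,
         y - Real.sqrt ((mg x y / mg v w) * (mg y v / mg x w)) • w}) j →
      j x = -(Real.sqrt ((mg x y / mg v w) * (mg x w / mg y v)) • v) ∧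
      j y = -(Real.sqrt ((mg x y / mg v w) * (mg y v / mg x w)) • w) := by
  set α := Real.sqrt ((mg x y / mg v w) * (mg x w / mg y v)) with hαdef
  set β := Real.sqrt ((mg x y / mg v w) * (mg y v / mg x w)) with hβdef
  -- positivity of inner products
  have hP : 0 < mg x y := mg_pos_of_lightlike hx hy hx0 hy0 (pair_li' hli 0 1 (by decide) rfl rfl)
  have hA : 0 < mg x w := mg_pos_of_lightlike hx hw hx0 hw0 (pair_li' hli 0 3 (by decide) rfl rfl)
  have hB : 0 < mg y v := mg_pos_of_lightlike hy hv hy0 hv0 (pair_li' hli 1 2 (by decide) rfl rfl)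
  have hQ : 0 < mg v w := mg_pos_of_lightlike hv hw hv0 hw0 (pair_li' hli 2 3 (by decide) rfl rfl)
  have hR : 0 < mg x v := mg_pos_of_lightlike hx hv hx0 hv0 (pair_li' hli 0 2 (by decide) rfl rfl)
  have hS : 0 < mg y w := mg_pos_of_lightlike hy hw hy0 hw0 (pair_li' hli 1 3 (by decide) rfl rfl)
  have hαpos : 0 < α := Real.sqrt_pos.mpr (by positivity)
  have hβpos : 0 < β := Real.sqrt_pos.mpr (by positivity)
  have hα2 : α ^ 2 = (mg x y / mg v w) * (mg x w / mg y v) := Real.sq_sqrt (by positivity)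
  have hβ2 : β ^ 2 = (mg x y / mg v w) * (mg y v / mg x w) := Real.sq_sqrt (by positivity)
  have hαβ : α * β * mg v w = mg x y := by
    have h1 : (α * β) ^ 2 = (mg x y / mg v w) ^ 2 := by
      rw [mul_pow, hα2, hβ2]; field_simp
    have h2 : α * β = mg x y / mg v w := by
      have := Real.sqrt_sq (mul_pos hαpos hβpos).le
      rw [← this, h1, Real.sqrt_sq (by positivity)]
    rw [h2]; field_simp
  have hkey : α * mg y v = β * mg x w := by
    have h1 : (α * mg y v) ^ 2 = (β * mg x w) ^ 2 := by
      rw [mul_pow, mul_pow, hα2, hβ2]; field_simp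
    have := Real.sqrt_sq (mul_pos hαpos hB).le
    rw [← this, h1, Real.sqrt_sq (mul_pos hβpos hA).le]
  -- names for the four vectors
  set a := x - α • v with ha
  set b := y - β • w with hb
  set t0 := x + α • v with ht0def
  set u0 := y + β • w with hu0def
  -- metric values
  have haa : mg a a = -(2*α) * mg x v := by
    rw [ha, hsub_lemma, mg_expand, hx, hv, mg_comm v x]; ring
  have hbb : mg b b = -(2*β) * mg y w := by
    rw [hb, hsub_lemma, mg_expand, hy, hw, mg_comm w y]; ring
  have htt : mg t0 t0 = (2*α) * mg x v := by
    rw [ht0def, mg_expand, hx, hv, mg_comm v x]; ring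
  have hta : mg t0 a = 0 := by
    rw [ht0def, ha, hsub_lemma, mg_expand, hx, hv, mg_comm v x]; ring
  have htb : mg t0 b = 0 := by
    rw [ht0def, hb, hsub_lemma, mg_expand, mg_comm v y]
    linear_combination hkey - hαβ
  have hua : mg u0 a = 0 := by
    rw [hu0def, ha, hsub_lemma, mg_expand, mg_comm y x, mg_comm w x, mg_comm w v]
    linear_combination - hkey - hαβ
  have hub : mg u0 b = 0 := by
    rw [hu0def, hb, hsub_lemma, mg_expand, hy, hw, mg_comm w y]; ring
  have httpos : 0 < mg t0 t0 := by rw [htt]; positivity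
  -- linear independence of the new quadruple
  have h4 := Fintype.linearIndependent_iff.mp hli
  have hF : LinearIndependent ℝ ![a, b, t0, u0] := by
    rw [Fintype.linearIndependent_iff]
    intro g hg
    simp only [Fin.sum_univ_four, Matrix.cons_val_zero, Matrix.cons_val_one, Matrix.head_cons,
      Matrix.cons_val_two, Matrix.tail_cons, Matrix.cons_val_three] at hg
    have hsum : (g 0 + g 2) • x + (g 1 + g 3) • y + (α*(g 2 - g 0)) • v + (β*(g 3 - g 1)) • w = 0 := by
      rw [show (g 0 + g 2) • x + (g 1 + g 3) • y + (α*(g 2 - g 0)) • v + (β*(g 3 - g 1)) • w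
          = g 0 • a + g 1 • b + g 2 • t0 + g 3 • u0 by rw [ha, hb, ht0def, hu0def]; module]
      exact hg
    have key := h4 ![g 0 + g 2, g 1 + g 3, α*(g 2 - g 0), β*(g 3 - g 1)] (by
      simp only [Fin.sum_univ_four, Matrix.cons_val_zero, Matrix.cons_val_one, Matrix.head_cons,
        Matrix.cons_val_two, Matrix.tail_cons, Matrix.cons_val_three]
      exact hsum)
    have e0 := key 0; have e1 := key 1; have e2 := key 2; have e3 := key 3
    simp only [Matrix.cons_val_zero, Matrix.cons_val_one, Matrix.head_cons,
      Matrix.cons_val_two, Matrix.tail_cons, Matrix.cons_val_three] at e0 e1 e2 e3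
    have hg20 : g 2 = g 0 := by
      rcases mul_eq_zero.mp e2 with h | h
      · exact absurd h (ne_of_gt hαpos)
      · linarith [sub_eq_zero.mp h]
    have hg31 : g 3 = g 1 := by
      rcases mul_eq_zero.mp e3 with h | h
      · exact absurd h (ne_of_gt hβpos)
      · linarith [sub_eq_zero.mp h]
    intro i
    fin_cases i
    · show g 0 = 0; linarith
    · show g 1 = 0; linarith
    · show g 2 = 0; linarith
    · show g 3 = 0; linarith
  have hab_li : LinearIndependent ℝ ![a, b] := pair_li' hF 0 1 (by decide) rfl rfl
  -- spacelike property
  have hCspace : ∀ z ∈ Submodule.span ℝ ({a, b} : Set V4), z ≠ 0 → mg z z < 0 := by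
    intro z hz hzne
    rcases Submodule.mem_span_pair.mp hz with ⟨p, q, rfl⟩
    by_contra hge
    push_neg at hge
    have horth : mg t0 (p • a + q • b) = 0 := by rw [mg_right2, hta, htb]; ring
    exact hzne (zero_of_orth_timelike httpos horth hge)
  -- finrank
  have hrank : Module.finrank ℝ (Submodule.span ℝ ({a, b} : Set V4)) = 2 := by
    have hr : Set.range ![a, b] = {a, b} := by
      simp only [Matrix.range_cons, Matrix.range_empty, Set.union_empty, Set.union_singleton]
      exact Set.pair_comm b a
    have := finrank_span_eq_card hab_li
    rwa [hr, Fintype.card_fin] at this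
  -- basis
  have hcard : Fintype.card (Fin 4) = Module.finrank ℝ V4 := by
    simp [Module.finrank_fin_fun]
  let Bs : Module.Basis (Fin 4) ℝ V4 := basisOfLinearIndependentOfCardEqFinrank hF hcard
  have hBs : ∀ i, Bs i = ![a, b, t0, u0] i := fun i => by
    simp [Bs, coe_basisOfLinearIndependentOfCardEqFinrank]
  -- complement
  have hcompl : {z : V4 | ∀ c ∈ Submodule.span ℝ ({a, b} : Set V4), mg z c = 0}
      = ↑(Submodule.span ℝ ({t0, u0} : Set V4)) := by
    ext z
    simp only [Set.mem_setOf_eq, SetLike.mem_coe]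
    constructor
    · intro hz
      have hza : mg z a = 0 := hz a (Submodule.subset_span (by simp))
      have hzb : mg z b = 0 := hz b (Submodule.subset_span (by simp))
      have hrepr := Bs.sum_repr z
      rw [Fin.sum_univ_four, hBs 0, hBs 1, hBs 2, hBs 3] at hrepr
      simp only [Matrix.cons_val_zero, Matrix.cons_val_one, Matrix.head_cons,
        Matrix.cons_val_two, Matrix.tail_cons, Matrix.cons_val_three] at hrepr
      set p : Fin 4 → ℝ := fun i => Bs.repr z i with hp
      -- hrepr : p 0 • a + p 1 • b + p 2 • t0 + p 3 • u0 = z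
      have h1 : p 0 * mg a a + p 1 * mg a b = 0 := by
        rw [← hrepr] at hza
        rw [mg_left4, hta, hua, mg_comm b a] at hza
        linarith
      have h2 : p 0 * mg a b + p 1 * mg b b = 0 := by
        rw [← hrepr] at hzb
        rw [mg_left4, htb, hub] at hzb
        linarith
      have hzero : p 0 • a + p 1 • b = 0 := by
        by_contra hne
        have hlt := hCspace _ (Submodule.mem_span_pair.mpr ⟨p 0, p 1, rfl⟩) hne
        have heq0 : mg (p 0 • a + p 1 • b) (p 0 • a + p 1 • b) = 0 := by
          rw [mg_pair_pair, mg_comm b a]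
          linear_combination p 0 * h1 + p 1 * h2
        linarith
      refine Submodule.mem_span_pair.mpr ⟨p 2, p 3, ?_⟩
      rw [← hrepr, show p 0 • a + p 1 • b + p 2 • t0 + p 3 • u0
        = (p 0 • a + p 1 • b) + (p 2 • t0 + p 3 • u0) by module, hzero, zero_add]
    · intro hz c hc
      rcases Submodule.mem_span_pair.mp hz with ⟨r, s, rfl⟩
      rcases Submodule.mem_span_pair.mp hc with ⟨p, q, rfl⟩
      rw [mg_pair_pair, hta, htb, hua, hub]; ring
  refine ⟨⟨hrank, hCspace⟩, hcompl, ?_⟩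
  -- reflection
  intro j hj
  obtain ⟨hfix, hneg⟩ := hj
  have hja : j a = a := hfix a (Submodule.subset_span (by simp))
  have hjb : j b = b := hfix b (Submodule.subset_span (by simp))
  have hortt : ∀ s ∈ Submodule.span ℝ ({a, b} : Set V4), mg t0 s = 0 := by
    intro s hs
    rcases Submodule.mem_span_pair.mp hs with ⟨p, q, rfl⟩
    rw [mg_right2, hta, htb]; ring
  have hortu : ∀ s ∈ Submodule.span ℝ ({a, b} : Set V4), mg u0 s = 0 := by
    intro s hs
    rcases Submodule.mem_span_pair.mp hs with ⟨p, q, rfl⟩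
    rw [mg_right2, hua, hub]; ring
  have hjt : j t0 = -t0 := hneg t0 hortt
  have hju : j u0 = -u0 := hneg u0 hortu
  constructor
  · have hxeq : x = (2⁻¹ : ℝ) • (a + t0) := by rw [ha, ht0def]; module
    have hjx : j x = (2⁻¹ : ℝ) • (j a + j t0) := by rw [hxeq, map_smul, map_add]
    rw [hja, hjt] at hjx
    rw [hjx, ha, ht0def]; module
  · have hyeq : y = (2⁻¹ : ℝ) • (b + u0) := by rw [hb, hu0def]; module
    have hjy : j y = (2⁻¹ : ℝ) • (j b + j u0) := by rw [hyeq, map_smul, map_add]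
    rw [hjb, hju] at hjy
    rw [hjy, hb, hu0def]; module
end
end

section
/- Let ρ be a nontrivial rotation and β a nontrivial boost in the restricted Lorentz group (with respect to a fixed timelike unit vector e₀). Then ρ and β commute if and only if the fixed-point set of ρ equals the Lorentz-orthogonal complement of the fixed-point set of β. -/
/-!
A nontrivial boost `β` is symmetric for the Euclidean product `inn e0`, so by the spectral
theorem it has an eigenvector with eigenvalue `μ ≠ 1`. Such an eigenvector is null, hence a
multiple of `e0 + n` for a spatial unit vector `n`; then `β (e0 - n) = μ⁻¹ • (e0 - n)`, and `β`
is the identity on the spatial plane `Q` orthogonal to `n`, being a positive symmetric isometry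
there. So `FP(β) = Q`, whose Lorentz-orthogonal complement is `P = span {e0, n}`.

If `ρ` commutes with `β`, then `ρ (e0 + n)` is another null `μ`-eigenvector, hence proportional
to `e0 + n`, so `ρ` fixes `P`. An orthogonal map of determinant one fixing a hyperplane is the
identity, so the nontrivial `ρ` fixes nothing outside `P`. Conversely, if `FP(ρ) = P`, then `ρ`
is the identity on `P` and preserves `Q`, while `β` preserves `P` and is the identity on `Q`;
such maps commute.
-/

noncomputable section

/-- The Euclidean inner product `⟨x,y⟩_e = -g(x,y) + 2 g(x,e) g(y,e)`
determined by a timelike unit vector `e`. -/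
def inn (e x y : V4) : ℝ := -mg x y + 2 * mg x e * mg y e

/-- A rotation with respect to `e`: a restricted Lorentz transformation fixing `e`. -/
def IsRotationAt (e : V4) (T : V4 →ₗ[ℝ] V4) : Prop :=
  IsRestrictedLorentz T ∧ T e = e

/-- A boost with respect to `e`: a restricted Lorentz transformation that is
self-adjoint and positive with respect to `⟨·,·⟩_e`. -/
def IsBoostAt (e : V4) (T : V4 →ₗ[ℝ] V4) : Prop :=
  IsRestrictedLorentz T ∧ (∀ x y, inn e (T x) y = inn e x (T y)) ∧
    (∀ x, x ≠ 0 → 0 < inn e (T x) x)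

open Matrix Module
open scoped InnerProductSpace

theorem LinearMap.comp_comm_of_codisjoint {R M : Type*} [Semiring R] [AddCommMonoid M]
    [Module R M] {P Q : Submodule R M} (hPQ : Codisjoint P Q) {f g : M →ₗ[R] M}
    (hfP : ∀ x ∈ P, f x = x) (hfQ : ∀ x ∈ Q, f x ∈ Q)
    (hgP : ∀ x ∈ P, g x ∈ P) (hgQ : ∀ x ∈ Q, g x = x) : f ∘ₗ g = g ∘ₗ f :=
  LinearMap.ext_on_codisjoint hPQ
    (fun x hx => by simp [hfP _ (hgP x hx), hfP x hx])
    (fun x hx => by simp [hgQ x hx, hgQ _ (hfQ x hx)])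

section SymmetricDotProduct

variable {ι : Type*} [Fintype ι] {T : (ι → ℝ) →ₗ[ℝ] (ι → ℝ)}

theorem dotProduct_eq_zero_of_apply_eq_smul (hT : ∀ x y, T x ⬝ᵥ y = x ⬝ᵥ T y)
    {v w : ι → ℝ} {μ ν : ℝ} (hv : T v = μ • v) (hw : T w = ν • w) (hμν : μ ≠ ν) :
    v ⬝ᵥ w = 0 := by
  have h : (μ • v) ⬝ᵥ w = v ⬝ᵥ (ν • w) := by rw [← hv, ← hw, hT]
  rw [smul_dotProduct, dotProduct_smul, smul_eq_mul, smul_eq_mul] at h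
  by_contra hvw
  exact hμν (mul_right_cancel₀ hvw h)

/-- With `w = T x - x`, the two isometry conditions give `⟨T w, w⟩ = -⟨w, w⟩`. -/
theorem apply_eq_self_of_dotProduct_apply_apply (hT : ∀ x y, T x ⬝ᵥ y = x ⬝ᵥ T y)
    (hpos : ∀ x, x ≠ 0 → 0 < T x ⬝ᵥ x) {x : ι → ℝ}
    (h₁ : T x ⬝ᵥ T x = x ⬝ᵥ x) (h₂ : T (T x) ⬝ᵥ T x = T x ⬝ᵥ x) : T x = x := by
  set w := T x - x
  have hw : T w ⬝ᵥ w = -(w ⬝ᵥ w) := by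
    simp only [w, map_sub, sub_dotProduct, dotProduct_sub]
    rw [hT (T x) x, dotProduct_comm x (T x)]
    linarith
  by_contra hne
  have hpos_w := hpos w (sub_ne_zero.mpr hne)
  have hnonneg : 0 ≤ w ⬝ᵥ w := Finset.sum_nonneg fun i _ => mul_self_nonneg (w i)
  linarith

end SymmetricDotProduct

section InnerProductSpace

variable {E : Type*} [NormedAddCommGroup E] [InnerProductSpace ℝ E] [FiniteDimensional ℝ E]

/-- On the line `Kᗮ` the isometry `T` acts by a scalar `c` with `c ^ 2 = 1`; if `c = -1`,
`T` is the reflection in `K`, whose determinant is `-1`. -/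
theorem LinearMap.eq_id_of_det_eq_one_of_eqOn {T : E →ₗ[ℝ] E}
    (hT : ∀ x y, ⟪T x, T y⟫_ℝ = ⟪x, y⟫_ℝ) (hdet : LinearMap.det T = 1)
    {K : Submodule ℝ E} (hK : finrank ℝ Kᗮ ≤ 1) (hfix : ∀ x ∈ K, T x = x) :
    T = LinearMap.id := by
  have hcodisj : Codisjoint K Kᗮ := K.isCompl_orthogonal.codisjoint
  have hmaps : ∀ z ∈ Kᗮ, T z ∈ Kᗮ := fun z hz k hk => by
    rw [← hfix k hk, hT]
    exact hz k hk
  obtain ⟨v, hv⟩ := finrank_le_one_iff.mp hK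
  obtain ⟨c, hc⟩ := hv ⟨T v, hmaps v v.2⟩
  have hTv : T v = c • (v : E) := by simpa using (congrArg Subtype.val hc).symm
  have hTz : ∀ z ∈ Kᗮ, T z = c • z := by
    intro z hz
    obtain ⟨a, ha⟩ := hv ⟨z, hz⟩
    obtain rfl : a • (v : E) = z := by simpa using congrArg Subtype.val ha
    rw [map_smul, hTv, smul_comm]
  by_cases hid : ∀ z ∈ Kᗮ, T z = z
  · exact LinearMap.ext_on_codisjoint hcodisj hfix hid
  push Not at hid
  obtain ⟨z, hz, hTz_ne⟩ := hid
  have hz0 : z ≠ 0 := by rintro rfl; simp at hTz_ne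
  have hc_neg : c = -1 := by
    have hzz := hT z z
    rw [hTz z hz, real_inner_smul_left, real_inner_smul_right, ← mul_assoc] at hzz
    have hcc : c * c = 1 :=
      mul_right_cancel₀ (inner_self_ne_zero.mpr hz0) (hzz.trans (one_mul _).symm)
    refine (mul_self_eq_one_iff.mp hcc).resolve_left fun hc1 => hTz_ne ?_
    rw [hTz z hz, hc1, one_smul]
  have hrefl : T = K.reflection.toLinearMap :=
    LinearMap.ext_on_codisjoint hcodisj
      (fun x hx => by simp [hfix x hx, Submodule.reflection_mem_subspace_eq_self hx])
      (fun x hx => by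
        simp [hTz x hx, hc_neg, Submodule.reflection_mem_subspace_orthogonalComplement_eq_neg hx])
  have hKperp : finrank ℝ Kᗮ = 1 :=
    le_antisymm hK (Nat.one_le_iff_ne_zero.mpr fun h =>
      hz0 ((Submodule.mem_bot ℝ).mp (Submodule.finrank_eq_zero.mp h ▸ hz)))
  rw [hrefl, Submodule.det_reflection, hKperp] at hdet
  norm_num at hdet

end InnerProductSpace

theorem LinearMap.eq_id_of_det_eq_one_of_eqOn_dotProduct {ι : Type*} [Fintype ι]
    {T : (ι → ℝ) →ₗ[ℝ] (ι → ℝ)} (hT : ∀ x y, T x ⬝ᵥ T y = x ⬝ᵥ y)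
    (hdet : LinearMap.det T = 1) {S : Submodule ℝ (ι → ℝ)}
    (hS : finrank ℝ (ι → ℝ) ≤ finrank ℝ S + 1) (hfix : ∀ x ∈ S, T x = x) :
    T = LinearMap.id := by
  let e := (WithLp.linearEquiv 2 ℝ (ι → ℝ)).symm
  let T' := e.toLinearMap ∘ₗ T ∘ₗ e.symm.toLinearMap
  have hT' : T' = LinearMap.id := by
    refine LinearMap.eq_id_of_det_eq_one_of_eqOn (K := S.map e.toLinearMap)
      (fun x y => ?_) (by rw [LinearMap.det_conj, hdet]) ?_ ?_
    · simp only [EuclideanSpace.inner_eq_star_dotProduct, star_trivial]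
      exact hT _ _
    · have := (S.map e.toLinearMap).finrank_add_finrank_orthogonal
      rw [LinearEquiv.finrank_map_eq, ← e.finrank_eq] at this
      omega
    · rintro _ ⟨x, hx, rfl⟩
      simp [T', hfix x hx]
  ext x : 1
  simpa [T', e] using congrArg e.symm (LinearMap.congr_fun hT' (e x))

section Minkowski

theorem mg_smul_left (c : ℝ) (x y : V4) : mg (c • x) y = c * mg x y := by
  simp only [mg, Pi.smul_apply, smul_eq_mul]; ring

theorem mg_smul_right (c : ℝ) (x y : V4) : mg x (c • y) = c * mg x y := by
  simp only [mg, Pi.smul_apply, smul_eq_mul]; ring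

theorem mg_sub_left (x y z : V4) : mg (x - y) z = mg x z - mg y z := by
  simp only [mg, Pi.sub_apply]; ring

theorem mg_add_left (x y z : V4) : mg (x + y) z = mg x z + mg y z := by
  simp only [mg, Pi.add_apply]; ring

theorem mg_e0_left (x : V4) : mg e0 x = x 0 := by simp [mg, e0]

theorem mg_e0_right (x : V4) : mg x e0 = x 0 := by simp [mg, e0]

theorem e0_dotProduct (x : V4) : e0 ⬝ᵥ x = x 0 := by simp [e0, dotProduct]

theorem inn_e0 (x y : V4) : inn e0 x y = x ⬝ᵥ y := by
  simp [inn, mg, e0, dotProduct, Fin.sum_univ_four]; ring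

theorem mg_eq_neg_dotProduct {x : V4} (hx : x 0 = 0) (y : V4) : mg x y = -(x ⬝ᵥ y) := by
  simp [mg, dotProduct, Fin.sum_univ_four, hx]; ring

theorem mg_e0_add {n : V4} (hn : n 0 = 0) (y : V4) : mg (e0 + n) y = (e0 - n) ⬝ᵥ y := by
  rw [mg_add_left, mg_e0_left, mg_eq_neg_dotProduct hn, sub_dotProduct, e0_dotProduct]; ring

theorem mg_e0_add_self {n : V4} (hn : n 0 = 0) : mg (e0 + n) (e0 + n) = 1 - n ⬝ᵥ n := by
  rw [mg_e0_add hn, sub_dotProduct, dotProduct_add, dotProduct_add, e0_dotProduct,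
    e0_dotProduct, dotProduct_comm n e0, e0_dotProduct, hn]
  simp [e0]

theorem apply_zero_ne_zero_of_mg_self {x : V4} (hx : mg x x = 0) (hx0 : x ≠ 0) : x 0 ≠ 0 := by
  intro h
  rw [mg_eq_neg_dotProduct h, neg_eq_zero, dotProduct_self_eq_zero] at hx
  exact hx0 hx

theorem exists_eq_smul_of_mg_eq_zero {a b : V4} (ha : mg a a = 0) (hb : mg b b = 0)
    (hab : mg a b = 0) (ha0 : a ≠ 0) : ∃ c : ℝ, b = c • a := by
  have ha₀ := apply_zero_ne_zero_of_mg_self ha ha0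
  refine ⟨b 0 / a 0, ?_⟩
  set d := b - (b 0 / a 0) • a
  have hd0 : d 0 = 0 := by simp [d, div_mul_cancel₀ _ ha₀]
  have hdd : mg d d = 0 := by
    simp only [mg, d, Pi.sub_apply, Pi.smul_apply, smul_eq_mul] at ha hb hab ⊢
    linear_combination hb - 2 * (b 0 / a 0) * hab + (b 0 / a 0) ^ 2 * ha
  rw [mg_eq_neg_dotProduct hd0, neg_eq_zero, dotProduct_self_eq_zero, sub_eq_zero] at hdd
  exact hdd

theorem mg_eq_zero_of_apply_eq_smul {T : V4 →ₗ[ℝ] V4} (hT : ∀ x y, mg (T x) (T y) = mg x y)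
    {v w : V4} {μ ν : ℝ} (hv : T v = μ • v) (hw : T w = ν • w) (hμν : μ * ν ≠ 1) :
    mg v w = 0 := by
  have h := hT v w
  rw [hv, hw, mg_smul_left, mg_smul_right, ← mul_assoc] at h
  by_contra hvw
  exact hμν (mul_right_cancel₀ hvw (h.trans (one_mul _).symm))

theorem inn_map_map {T : V4 →ₗ[ℝ] V4} (hT : ∀ x y, mg (T x) (T y) = mg x y) {e : V4}
    (he : T e = e) (x y : V4) : inn e (T x) (T y) = inn e x y := by
  simp only [inn]
  conv_lhs => rw [← he]
  simp only [hT]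

end Minkowski

section AxisPlane

open Submodule

def transverse (n : V4) : Submodule ℝ V4 where
  carrier := {q | q 0 = 0 ∧ n ⬝ᵥ q = 0}
  add_mem' hx hy := ⟨by simp [hx.1, hy.1], by simp [dotProduct_add, hx.2, hy.2]⟩
  zero_mem' := by simp
  smul_mem' c x hx := ⟨by simp [hx.1], by simp [dotProduct_smul, hx.2]⟩

variable {n : V4}

theorem mem_transverse {q : V4} : q ∈ transverse n ↔ q 0 = 0 ∧ n ⬝ᵥ q = 0 := Iff.rfl

theorem sub_mem_transverse (hn0 : n 0 = 0) (hnn : n ⬝ᵥ n = 1) (x : V4) :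
    x - (x 0 • e0 + (n ⬝ᵥ x) • n) ∈ transverse n := by
  constructor
  · simp [e0, hn0]
  · rw [dotProduct_sub, dotProduct_add, dotProduct_smul, dotProduct_smul, dotProduct_comm n e0,
      e0_dotProduct, hn0, hnn]
    simp

theorem codisjoint_span_transverse (hn0 : n 0 = 0) (hnn : n ⬝ᵥ n = 1) :
    Codisjoint (span ℝ {e0, n}) (transverse n) := by
  refine codisjoint_iff.mpr (eq_top_iff.mpr fun x _ => ?_)
  rw [← add_sub_cancel (x 0 • e0 + (n ⬝ᵥ x) • n) x]
  exact add_mem_sup (mem_span_pair.mpr ⟨_, _, rfl⟩) (sub_mem_transverse hn0 hnn x)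

theorem mg_eq_zero_of_mem_span_of_mem_transverse (hn0 : n 0 = 0) {x y : V4}
    (hx : x ∈ span ℝ {e0, n}) (hy : y ∈ transverse n) : mg x y = 0 := by
  obtain ⟨a, b, rfl⟩ := mem_span_pair.mp hx
  rw [mg_add_left, mg_smul_left, mg_smul_left, mg_e0_left, mg_eq_neg_dotProduct hn0, hy.1, hy.2]
  ring

theorem mem_span_iff_forall_mg (hn0 : n 0 = 0) (hnn : n ⬝ᵥ n = 1) (x : V4) :
    x ∈ span ℝ {e0, n} ↔ ∀ y ∈ transverse n, mg x y = 0 := by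
  refine ⟨fun hx y hy => mg_eq_zero_of_mem_span_of_mem_transverse hn0 hx hy, fun hx => ?_⟩
  set p := x 0 • e0 + (n ⬝ᵥ x) • n
  have hp : p ∈ span ℝ {e0, n} := mem_span_pair.mpr ⟨_, _, rfl⟩
  have hq := sub_mem_transverse hn0 hnn x
  have hqq : mg (x - p) (x - p) = 0 := by
    rw [mg_sub_left, hx _ hq, mg_eq_zero_of_mem_span_of_mem_transverse hn0 hp hq, sub_zero]
  rw [mg_eq_neg_dotProduct hq.1, neg_eq_zero, dotProduct_self_eq_zero, sub_eq_zero] at hqq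
  exact hqq ▸ hp

theorem finrank_span_e0_pair (hn0 : n 0 = 0) (hnn : n ⬝ᵥ n = 1) :
    finrank ℝ (span ℝ {e0, n}) = 2 := by
  have hind : LinearIndependent ℝ ![e0, n] := by
    refine LinearIndependent.pair_iff.mpr fun s t hst => ?_
    have hs : s = 0 := by simpa [e0, hn0] using congrFun hst 0
    subst hs
    have := congrArg (n ⬝ᵥ ·) hst
    simp only [zero_smul, zero_add, dotProduct_smul, hnn, smul_eq_mul, mul_one,
      dotProduct_zero] at this
    exact ⟨rfl, this⟩
  rw [← Matrix.range_cons_cons_empty e0 n ![], finrank_span_eq_card hind, Fintype.card_fin]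

theorem mem_transverse_iff_dotProduct {q : V4} :
    q ∈ transverse n ↔ (e0 + n) ⬝ᵥ q = 0 ∧ (e0 - n) ⬝ᵥ q = 0 := by
  rw [mem_transverse, add_dotProduct, sub_dotProduct, e0_dotProduct]
  constructor
  · rintro ⟨h₁, h₂⟩
    constructor <;> linarith
  · rintro ⟨h₁, h₂⟩
    constructor <;> linarith

end AxisPlane

namespace IsBoostAt

variable {β : V4 →ₗ[ℝ] V4} (hβ : IsBoostAt e0 β)
include hβ

theorem dotProduct_map_left (x y : V4) : β x ⬝ᵥ y = x ⬝ᵥ β y := by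
  simpa [inn_e0] using hβ.2.1 x y

theorem dotProduct_map_self_pos {x : V4} (hx : x ≠ 0) : 0 < β x ⬝ᵥ x := by
  simpa [inn_e0] using hβ.2.2 x hx

/-- The spectral theorem, applied to the symmetric matrix of `β - 1`. -/
theorem exists_apply_eq_smul (hβ1 : β ≠ LinearMap.id) :
    ∃ (v : V4) (μ : ℝ), v ≠ 0 ∧ μ ≠ 1 ∧ β v = μ • v := by
  have hherm : (LinearMap.toMatrix' β - 1).IsHermitian := by
    refine Matrix.IsHermitian.sub ?_ Matrix.isHermitian_one
    ext i j
    simpa [LinearMap.toMatrix'_apply, dotProduct_single, single_dotProduct] using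
      hβ.dotProduct_map_left (Pi.single i 1) (Pi.single j 1)
  have hne : LinearMap.toMatrix' β - 1 ≠ 0 := by
    rw [sub_ne_zero, ← LinearMap.toMatrix'_id]
    exact fun h => hβ1 (LinearMap.toMatrix'.injective h)
  obtain ⟨v, t, ht, hv, hvt⟩ := hherm.exists_eigenvector_of_ne_zero hne
  refine ⟨v, 1 + t, hv, by simpa using ht, ?_⟩
  rw [sub_mulVec, one_mulVec, LinearMap.toMatrix'_mulVec, sub_eq_iff_eq_add] at hvt
  rw [hvt, add_smul, one_smul, add_comm]

/-- An eigenvector `v` with eigenvalue `μ ≠ 1` is null, so it can be scaled to `e0 + n` with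
`n` a spatial unit vector; `e0 - n` is then an eigenvector because `β` is symmetric and
Lorentz. -/
theorem exists_axis (hβ1 : β ≠ LinearMap.id) :
    ∃ (n : V4) (μ : ℝ), n 0 = 0 ∧ n ⬝ᵥ n = 1 ∧ 0 < μ ∧ μ ≠ 1 ∧
      β (e0 + n) = μ • (e0 + n) ∧ β (e0 - n) = μ⁻¹ • (e0 - n) := by
  obtain ⟨v, μ, hv, hμ1, hβv⟩ := hβ.exists_apply_eq_smul hβ1
  have hμ : 0 < μ := by
    have h := hβ.dotProduct_map_self_pos hv
    rw [hβv, smul_dotProduct, smul_eq_mul] at h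
    exact pos_of_mul_pos_left h (Finset.sum_nonneg fun i _ => mul_self_nonneg (v i))
  have hμμ : μ * μ ≠ 1 := fun h => (mul_self_eq_one_iff.mp h).elim hμ1 fun h => by linarith
  have hvv : mg v v = 0 := mg_eq_zero_of_apply_eq_smul hβ.1.1 hβv hβv hμμ
  have hv0 := apply_zero_ne_zero_of_mg_self hvv hv
  set n := (v 0)⁻¹ • v - e0
  have hu : e0 + n = (v 0)⁻¹ • v := add_sub_cancel _ _
  have hn0 : n 0 = 0 := by simp [n, e0, inv_mul_cancel₀ hv0]
  have hβu : β (e0 + n) = μ • (e0 + n) := by rw [hu, map_smul, hβv, smul_comm]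
  have hnn : n ⬝ᵥ n = 1 := by
    have h := mg_e0_add_self hn0
    rw [hu, mg_smul_left, mg_smul_right, hvv] at h
    linarith
  refine ⟨n, μ, hn0, hnn, hμ, hμ1, hβu, dotProduct_eq _ _ fun y => ?_⟩
  calc β (e0 - n) ⬝ᵥ y = mg (e0 + n) (β y) := by rw [hβ.dotProduct_map_left, mg_e0_add hn0]
    _ = μ⁻¹ * mg (β (e0 + n)) (β y) := by
      rw [hβu, mg_smul_left, inv_mul_cancel_left₀ hμ.ne']
    _ = (μ⁻¹ • (e0 - n)) ⬝ᵥ y := by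
      rw [hβ.1.1, mg_e0_add hn0, smul_dotProduct, smul_eq_mul]

variable {n : V4} {μ : ℝ}

theorem mapsTo_transverse (hadd : β (e0 + n) = μ • (e0 + n))
    (hsub : β (e0 - n) = μ⁻¹ • (e0 - n)) {q : V4} (hq : q ∈ transverse n) :
    β q ∈ transverse n := by
  rw [mem_transverse_iff_dotProduct] at hq ⊢
  rw [← hβ.dotProduct_map_left, ← hβ.dotProduct_map_left, hadd, hsub, smul_dotProduct,
    smul_dotProduct, hq.1, hq.2]
  simp

/-- On `transverse n` the Minkowski metric is minus the dot product, so `β` is a symmetric,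
positive isometry there. -/
theorem apply_eq_self_iff (hμ1 : μ ≠ 1) (hadd : β (e0 + n) = μ • (e0 + n))
    (hsub : β (e0 - n) = μ⁻¹ • (e0 - n)) (y : V4) : β y = y ↔ y ∈ transverse n := by
  have hsymm := hβ.dotProduct_map_left
  constructor
  · intro hy
    have hy' : β y = (1 : ℝ) • y := by rw [one_smul, hy]
    rw [mem_transverse_iff_dotProduct]
    exact ⟨dotProduct_eq_zero_of_apply_eq_smul hsymm hadd hy' hμ1,
      dotProduct_eq_zero_of_apply_eq_smul hsymm hsub hy' (inv_ne_one.mpr hμ1)⟩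
  · intro hy
    have hmaps : ∀ {q}, q ∈ transverse n → β q ∈ transverse n :=
      hβ.mapsTo_transverse hadd hsub
    have hisom : ∀ a ∈ transverse n, ∀ b, β a ⬝ᵥ β b = a ⬝ᵥ b := fun a ha b => by
      rw [← neg_neg (β a ⬝ᵥ β b), ← mg_eq_neg_dotProduct (hmaps ha).1, hβ.1.1,
        mg_eq_neg_dotProduct ha.1, neg_neg]
    exact apply_eq_self_of_dotProduct_apply_apply hsymm (fun x => hβ.dotProduct_map_self_pos)
      (hisom y hy y) (hisom _ (hmaps hy) y)

theorem mapsTo_span (hn0 : n 0 = 0) (hnn : n ⬝ᵥ n = 1) (hμ1 : μ ≠ 1)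
    (hadd : β (e0 + n) = μ • (e0 + n)) (hsub : β (e0 - n) = μ⁻¹ • (e0 - n)) {x : V4}
    (hx : x ∈ Submodule.span ℝ {e0, n}) : β x ∈ Submodule.span ℝ {e0, n} := by
  rw [mem_span_iff_forall_mg hn0 hnn] at hx ⊢
  intro y hy
  rw [← (hβ.apply_eq_self_iff hμ1 hadd hsub y).mpr hy, hβ.1.1]
  exact hx y hy

end IsBoostAt

namespace IsRotationAt

variable {ρ : V4 →ₗ[ℝ] V4} (hρ : IsRotationAt e0 ρ)
include hρ

theorem apply_zero (x : V4) : ρ x 0 = x 0 := by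
  rw [← mg_e0_right (ρ x), ← hρ.2, hρ.1.1, mg_e0_right]

theorem dotProduct_map (x y : V4) : ρ x ⬝ᵥ ρ y = x ⬝ᵥ y := by
  rw [← inn_e0, ← inn_e0, inn_map_map hρ.1.1 hρ.2]

theorem mapsTo_transverse {n q : V4} (hn : ρ n = n) (hq : q ∈ transverse n) :
    ρ q ∈ transverse n :=
  ⟨by rw [hρ.apply_zero, hq.1], by rw [← hn, hρ.dotProduct_map, hq.2]⟩

theorem fixed_eq_of_finrank_eq_two (hρ1 : ρ ≠ LinearMap.id) {P : Submodule ℝ V4}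
    (hP : finrank ℝ P = 2) (hfix : ∀ x ∈ P, ρ x = x) : {x | ρ x = x} = P := by
  ext x
  refine ⟨fun hx => ?_, hfix x⟩
  by_contra hxP
  have hlt : P < LinearMap.eqLocus ρ LinearMap.id :=
    SetLike.lt_iff_le_and_exists.mpr ⟨fun y hy => hfix y hy, x, hx, hxP⟩
  have hrank : 2 < finrank ℝ (LinearMap.eqLocus ρ LinearMap.id) :=
    hP ▸ Submodule.finrank_lt_finrank_of_lt hlt
  refine hρ1 (LinearMap.eq_id_of_det_eq_one_of_eqOn_dotProduct hρ.dotProduct_map hρ.1.2.1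
    (S := LinearMap.eqLocus ρ LinearMap.id) ?_ fun y hy => hy)
  rw [finrank_fin_fun]
  exact Nat.succ_le_succ hrank

/-- `ρ (e0 + n)` is, like `e0 + n`, a null `μ`-eigenvector of `β`; two such vectors are
Minkowski-orthogonal, hence proportional, and `ρ` preserves the time coordinate. -/
theorem apply_eq_self_of_comp_eq {β : V4 →ₗ[ℝ] V4} (hβ : IsBoostAt e0 β) {n : V4} {μ : ℝ}
    (hn0 : n 0 = 0) (hnn : n ⬝ᵥ n = 1) (hμ : 0 < μ) (hμ1 : μ ≠ 1)
    (hadd : β (e0 + n) = μ • (e0 + n)) (hcomm : ρ ∘ₗ β = β ∘ₗ ρ) : ρ n = n := by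
  have hμμ : μ * μ ≠ 1 := fun h => (mul_self_eq_one_iff.mp h).elim hμ1 fun h => by linarith
  have hρu : β (ρ (e0 + n)) = μ • ρ (e0 + n) := by
    rw [← LinearMap.comp_apply, ← hcomm, LinearMap.comp_apply, hadd, map_smul]
  have huu : mg (e0 + n) (e0 + n) = 0 := by rw [mg_e0_add_self hn0, hnn, sub_self]
  have hu0 : e0 + n ≠ 0 := fun h => by simpa [e0, hn0] using congrFun h 0
  obtain ⟨c, hc⟩ := exists_eq_smul_of_mg_eq_zero huu (by rw [hρ.1.1, huu])
    (mg_eq_zero_of_apply_eq_smul hβ.1.1 hadd hρu hμμ) hu0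
  have hc1 : c = 1 := by simpa [hρ.apply_zero, e0, hn0] using (congrFun hc 0).symm
  rw [hc1, one_smul, map_add, hρ.2, add_right_inj] at hc
  exact hc

end IsRotationAt

/-- A nontrivial rotation `ρ` and a nontrivial boost `β` (with respect to `e₀`)
commute if and only if the fixed-point set of `ρ` equals the Lorentz-orthogonal
complement of the fixed-point set of `β`. -/
theorem rotation_boost_commute_iff
    (ρ β : V4 →ₗ[ℝ] V4) (hρ : IsRotationAt e0 ρ) (hρ1 : ρ ≠ LinearMap.id)
    (hβ : IsBoostAt e0 β) (hβ1 : β ≠ LinearMap.id) :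
    ρ ∘ₗ β = β ∘ₗ ρ ↔
      {x : V4 | ρ x = x} = {x : V4 | ∀ y, β y = y → mg x y = 0} := by
  obtain ⟨n, μ, hn0, hnn, hμ, hμ1, hadd, hsub⟩ := hβ.exists_axis hβ1
  have hperp : {x : V4 | ∀ y, β y = y → mg x y = 0} = Submodule.span ℝ {e0, n} := by
    ext x
    simp only [Set.mem_ofPred_eq, SetLike.mem_coe, hβ.apply_eq_self_iff hμ1 hadd hsub,
      mem_span_iff_forall_mg hn0 hnn]
  rw [hperp]
  constructor
  · intro hcomm
    have hρn := hρ.apply_eq_self_of_comp_eq hβ hn0 hnn hμ hμ1 hadd hcomm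
    refine hρ.fixed_eq_of_finrank_eq_two hρ1 (finrank_span_e0_pair hn0 hnn) fun x hx => ?_
    obtain ⟨a, b, rfl⟩ := Submodule.mem_span_pair.mp hx
    simp [hρ.2, hρn]
  · intro hfix
    have hρP : ∀ x ∈ Submodule.span ℝ {e0, n}, ρ x = x := fun x hx => by
      rw [← SetLike.mem_coe, ← hfix] at hx
      exact hx
    have hρn : ρ n = n := hρP n (Submodule.subset_span (by simp))
    exact LinearMap.comp_comm_of_codisjoint (codisjoint_span_transverse hn0 hnn) hρP
      (fun q => hρ.mapsTo_transverse hρn) (fun x => hβ.mapsTo_span hn0 hnn hμ1 hadd hsub)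
      fun q => (hβ.apply_eq_self_iff hμ1 hadd hsub q).mpr
end
end

section
/- Fix a timelike unit vector e₀ and let ρ ≠ 1 be a rotation and β a boost with respect to e₀. Let E(ρ,β) be the set of unit vectors orthogonal to e₀ lying in FP(ρ)^⊥ ∩ FP(β). Then E(ρ,β) is homeomorphic to the circle S¹ if ρβ = βρ, and otherwise E(ρ,β) = {e, -e} for some time-zero unit vector e. -/
noncomputable section

/-- The set `E(ρ,β)` of time-zero unit vectors lying in `FP(ρ)^⊥ ∩ FP(β)`. -/
def ESet (ρ β : V4 →ₗ[ℝ] V4) : Set V4 :=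
  {e : V4 | mg e e = -1 ∧ mg e e0 = 0 ∧ (∀ y, ρ y = y → mg e y = 0) ∧ β e = e}

/-!
Identify `ℝ^{1+3}` with Euclidean `ℝ⁴` through `⟨·,·⟩_{e₀}`, so that
`g(x, y) = 2 ⟨x, e₀⟩ ⟨y, e₀⟩ - ⟨x, y⟩`. A rotation `ρ` is then an orthogonal map of determinant one
fixing `e₀`. An orthogonal `A` with `det A ≠ (-1)ⁿ` has `det (1 - A) = 0`; applied to `ρ` composed
with the reflection in `e₀^⊥` this yields a fixed vector of `ρ` orthogonal to `e₀`. By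
Cartan–Dieudonné an orthogonal map of determinant one fixing a hyperplane is the identity, so for
`ρ ≠ 1` the fixed set `FP(ρ)` is a plane.

A boost `β` fixes every time-zero `x` with `⟨β x, e₀⟩ = 0`: such an `x` satisfies `β² x = x`, and
positivity excludes the eigenvalue `-1`. Consequently `E(ρ,β)` is the unit sphere of
`(FP(ρ) + ℝ β e₀)^⊥`, and `ρ`, `β` commute exactly when `β e₀ ∈ FP(ρ)`: then `β` fixes `FP(ρ)^⊥`
pointwise and preserves `FP(ρ)`. In that case the subspace is a plane and `E(ρ,β)` is a circle;
otherwise it is a line and `E(ρ,β) = {e, -e}`.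
-/

open Module Submodule Metric
open scoped InnerProductSpace Matrix

theorem Matrix.det_one_sub_eq_zero_of_mem_unitaryGroup {n : Type*} [Fintype n] [DecidableEq n]
    {A : Matrix n n ℝ} (hA : A ∈ unitaryGroup n ℝ) (hdet : A.det ≠ (-1) ^ Fintype.card n) :
    (1 - A).det = 0 := by
  have key : star A * (1 - A) = -(1 - A)ᴴ := by
    rw [mul_sub, mul_one, mem_unitaryGroup_iff'.mp hA, conjTranspose_sub, conjTranspose_one,
      neg_sub, star_eq_conjTranspose]
  have hdet' := congrArg det key
  rw [det_mul, det_neg, star_eq_conjTranspose, det_conjTranspose, det_conjTranspose, star_trivial,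
    star_trivial] at hdet'
  exact (mul_eq_zero.mp (by linear_combination hdet')).resolve_left (sub_ne_zero.mpr hdet)

variable {F : Type*} [NormedAddCommGroup F] [InnerProductSpace ℝ F]

namespace LinearIsometryEquiv

def fixedSubspace (φ : F ≃ₗᵢ[ℝ] F) : Submodule ℝ F :=
  LinearMap.ker ((ContinuousLinearMap.id ℝ F - (φ : F →L[ℝ] F) : F →L[ℝ] F) : F →ₗ[ℝ] F)

theorem mem_fixedSubspace {φ : F ≃ₗᵢ[ℝ] F} {x : F} : x ∈ φ.fixedSubspace ↔ φ x = x := by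
  simp [fixedSubspace, sub_eq_zero, eq_comm (a := x)]

variable [FiniteDimensional ℝ F]

theorem exists_apply_eq_self_of_det_ne (φ : F ≃ₗᵢ[ℝ] F)
    (h : LinearMap.det φ.toLinearMap ≠ (-1) ^ finrank ℝ F) : ∃ v ≠ 0, φ v = v := by
  let b := stdOrthonormalBasis ℝ F
  have hdet : LinearMap.det (LinearMap.id - φ.toLinearMap) = 0 := by
    rw [← LinearMap.det_toMatrix b.toBasis, _root_.map_sub, LinearMap.toMatrix_id]
    refine Matrix.det_one_sub_eq_zero_of_mem_unitaryGroup (φ.toMatrix_mem_unitaryGroup b b) ?_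
    rwa [LinearMap.det_toMatrix, Fintype.card_fin]
  obtain ⟨v, hv, hv0⟩ :=
    exists_mem_ne_zero_of_ne_bot (LinearMap.bot_lt_ker_of_det_eq_zero hdet).ne'
  exact ⟨v, hv0, (sub_eq_zero.mp hv).symm⟩

theorem two_le_finrank_fixedSubspace (φ : F ≃ₗᵢ[ℝ] F) (hdet : LinearMap.det φ.toLinearMap = 1)
    (hF : Even (finrank ℝ F)) {e : F} (he0 : e ≠ 0) (he : φ e = e) :
    2 ≤ finrank ℝ φ.fixedSubspace := by
  -- `R ∘ φ` has determinant `-1`, so it fixes some `v`; as `R` negates `e`, `v ⊥ e` and `φ v = v`.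
  set R := (ℝ ∙ e)ᗮ.reflection
  have hR : LinearMap.det (φ.trans R).toLinearMap ≠ (-1) ^ finrank ℝ F := by
    rw [show (φ.trans R).toLinearMap = R.toLinearMap ∘ₗ φ.toLinearMap from rfl,
      LinearMap.det_comp, det_reflection, orthogonal_orthogonal, finrank_span_singleton he0, hdet,
      hF.neg_one_pow]
    norm_num
  obtain ⟨v, hv0, hv⟩ := (φ.trans R).exists_apply_eq_self_of_det_ne hR
  have hRv : R v = φ v := by
    nth_rw 1 [← hv]
    exact (ℝ ∙ e)ᗮ.reflection_reflection _
  have hev : ⟪e, v⟫_ℝ = 0 := by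
    have : ⟪e, v⟫_ℝ = -⟪e, v⟫_ℝ := calc
      ⟪e, v⟫_ℝ = ⟪R e, R v⟫_ℝ := (R.inner_map_map e v).symm
      _ = -⟪φ e, φ v⟫_ℝ := by
        rw [reflection_orthogonalComplement_singleton_eq_neg, hRv, inner_neg_left, he]
      _ = -⟪e, v⟫_ℝ := by rw [φ.inner_map_map]
    linarith
  have hv_perp : v ∈ (ℝ ∙ e)ᗮ := mem_orthogonal_singleton_iff_inner_right.mpr hev
  have hφv : φ v = v := by
    rw [← hRv]
    exact reflection_mem_subspace_eq_self hv_perp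
  have hv_notMem : v ∉ ℝ ∙ e := fun h =>
    hv0 ((mem_bot ℝ).mp ((ℝ ∙ e).inf_orthogonal_eq_bot ▸ ⟨h, hv_perp⟩))
  calc 2 = finrank ℝ ↥((ℝ ∙ e) ⊔ ℝ ∙ v) := by
        rw [finrank_sup_span_singleton hv_notMem, finrank_span_singleton he0]
    _ ≤ finrank ℝ φ.fixedSubspace := finrank_mono <| sup_le
        ((span_singleton_le_iff_mem _ _).mpr (mem_fixedSubspace.mpr he))
        ((span_singleton_le_iff_mem _ _).mpr (mem_fixedSubspace.mpr hφv))

theorem finrank_fixedSubspace_add_two_le (φ : F ≃ₗᵢ[ℝ] F)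
    (hdet : LinearMap.det φ.toLinearMap = 1) (hφ : φ ≠ 1) :
    finrank ℝ φ.fixedSubspace + 2 ≤ finrank ℝ F := by
  by_contra! h
  have hφ1 : finrank ℝ φ.fixedSubspaceᗮ ≤ 1 := by
    have := φ.fixedSubspace.finrank_add_finrank_orthogonal
    omega
  obtain ⟨l, hl, rfl⟩ := φ.reflections_generate_dim_aux hφ1
  match l, hl with
  | [], _ => exact hφ rfl
  | [v], _ =>
    rw [List.map_singleton, List.prod_singleton] at hφ hdet
    by_cases hv : v = 0
    · subst hv
      refine hφ (LinearIsometryEquiv.ext fun x => reflection_mem_subspace_eq_self ?_)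
      simp
    · rw [det_reflection, orthogonal_orthogonal, finrank_span_singleton hv] at hdet
      norm_num at hdet

theorem finrank_fixedSubspace_eq_two (φ : F ≃ₗᵢ[ℝ] F) (hF : finrank ℝ F = 4)
    (hdet : LinearMap.det φ.toLinearMap = 1) (hφ : φ ≠ 1) {e : F} (he0 : e ≠ 0) (he : φ e = e) :
    finrank ℝ φ.fixedSubspace = 2 :=
  le_antisymm (by have := φ.finrank_fixedSubspace_add_two_le hdet hφ; omega)
    (φ.two_le_finrank_fixedSubspace hdet (by rw [hF]; decide) he0 he)

end LinearIsometryEquiv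

theorem nonempty_sphere_inter_homeomorph_circle {K : Submodule ℝ F} (hK : finrank ℝ K = 2) :
    Nonempty (↥(sphere (0 : F) 1 ∩ K) ≃ₜ Circle) := by
  have : FiniteDimensional ℝ K := Module.finite_of_finrank_pos (by omega)
  let L : K ≃ₗᵢ[ℝ] ℂ :=
    (Complex.isometryOfOrthonormal ((stdOrthonormalBasis ℝ K).reindex (finCongr hK))).symm
  exact ⟨{
    toFun x := ⟨L ⟨x, x.2.2⟩, mem_sphere_zero_iff_norm.mpr (by simpa using x.2.1)⟩
    invFun z := ⟨L.symm z, by simp [norm_coe, Circle.norm_coe], (L.symm z).2⟩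
    left_inv x := by simp
    right_inv z := by ext; simp
    continuous_toFun := by fun_prop
    continuous_invFun := by fun_prop }⟩

theorem exists_sphere_inter_eq_pair {K : Submodule ℝ F} (hK : finrank ℝ K = 1) :
    ∃ v, sphere (0 : F) 1 ∩ K = {v, -v} := by
  have : FiniteDimensional ℝ K := Module.finite_of_finrank_pos (by omega)
  let b := (stdOrthonormalBasis ℝ K).reindex (finCongr hK)
  have hb : ‖(b 0 : F)‖ = 1 := by rw [norm_coe, b.norm_eq_one]
  refine ⟨b 0, Set.ext fun x => ⟨?_, ?_⟩⟩
  · rintro ⟨hx1, hxK⟩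
    obtain ⟨c, rfl⟩ : ∃ c : ℝ, c • (b 0 : F) = x :=
      ⟨_, congrArg Subtype.val (by simpa using b.sum_repr' ⟨x, hxK⟩)⟩
    rw [mem_sphere_zero_iff_norm, norm_smul, hb, mul_one, Real.norm_eq_abs] at hx1
    rcases (abs_eq zero_le_one).mp hx1 with rfl | rfl <;> simp
  · rintro (rfl | rfl) <;> simp [hb]

theorem LinearMap.comp_comm_of_sup_eq_top {R M : Type*} [Semiring R] [AddCommMonoid M]
    [Module R M] {S T : Submodule R M} (hST : S ⊔ T = ⊤) {f g : M →ₗ[R] M}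
    (hfS : ∀ x ∈ S, f x = x) (hgT : ∀ x ∈ T, g x = x) (hgS : ∀ x ∈ S, g x ∈ S)
    (hfT : ∀ x ∈ T, f x ∈ T) : f ∘ₗ g = g ∘ₗ f := by
  ext x
  obtain ⟨s, hs, t, ht, rfl⟩ := mem_sup.mp (hST ▸ mem_top : x ∈ S ⊔ T)
  simp [hfS _ (hgS s hs), hgT t ht, hfS s hs, hgT _ (hfT t ht)]

/-- For a unit vector `e`, the Minkowski metric of signature `(+, -, …, -)` with time axis `e`. -/
def minkowskiForm (e x y : F) : ℝ := 2 * ⟪x, e⟫_ℝ * ⟪y, e⟫_ℝ - ⟪x, y⟫_ℝ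

theorem inner_map_map_of_minkowskiForm {e : F} (he : ⟪e, e⟫_ℝ = 1) {f : F →ₗ[ℝ] F}
    (hfe : f e = e) (hf : ∀ x y, minkowskiForm e (f x) (f y) = minkowskiForm e x y) (x y : F) :
    ⟪f x, f y⟫_ℝ = ⟪x, y⟫_ℝ := by
  have hfix : ∀ z, ⟪f z, e⟫_ℝ = ⟪z, e⟫_ℝ := fun z => by
    have := hf z e
    simp only [minkowskiForm, hfe, he] at this
    linarith
  have := hf x y
  simp only [minkowskiForm, hfix] at this
  linarith

namespace LinearMap.IsPositive

variable {e : F} {β : F →ₗ[ℝ] F} (hβ : β.IsPositive)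
  (hg : ∀ x y, minkowskiForm e (β x) (β y) = minkowskiForm e x y)
include hβ hg

theorem apply_eq_self_of_inner_eq_zero {x : F} (hx : ⟪x, e⟫_ℝ = 0) (hβx : ⟪β x, e⟫_ℝ = 0) :
    β x = x := by
  have hββ : β (β x) = x := ext_inner_right ℝ fun y => by
    have := hg x y
    simp only [minkowskiForm, hx, hβx] at this
    rw [hβ.isSymmetric]
    linarith
  have hpos := hβ.re_inner_nonneg_left (β x - x)
  rw [map_sub, hββ, ← neg_sub, inner_neg_left, RCLike.re_to_real,
    real_inner_self_eq_norm_sq] at hpos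
  exact sub_eq_zero.mp (norm_eq_zero.mp (by nlinarith [norm_nonneg (β x - x)]))

theorem comp_comm_iff_mem_fixedSubspace [FiniteDimensional ℝ F] (φ : F ≃ₗᵢ[ℝ] F)
    (he : φ e = e) : φ.toLinearMap ∘ₗ β = β ∘ₗ φ.toLinearMap ↔ β e ∈ φ.fixedSubspace := by
  set S := φ.fixedSubspace
  have heS : e ∈ S := φ.mem_fixedSubspace.mpr he
  refine ⟨fun h => φ.mem_fixedSubspace.mpr (by simpa [he] using LinearMap.congr_fun h e),
    fun hβe => ?_⟩
  have hβT : ∀ x ∈ Sᗮ, β x = x := fun x hx =>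
    hβ.apply_eq_self_of_inner_eq_zero hg (inner_left_of_mem_orthogonal heS hx)
      (by rw [hβ.isSymmetric]; exact inner_left_of_mem_orthogonal hβe hx)
  refine LinearMap.comp_comm_of_sup_eq_top S.sup_orthogonal_of_hasOrthogonalProjection
    (fun x hx => φ.mem_fixedSubspace.mp hx) hβT (fun x hx => ?_) (fun x hx => ?_)
  · rw [← S.orthogonal_orthogonal, mem_orthogonal]
    intro t ht
    rw [← hβ.isSymmetric, hβT t ht]
    exact inner_left_of_mem_orthogonal hx ht
  · rw [mem_orthogonal]
    intro s hs
    rw [← φ.mem_fixedSubspace.mp hs]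
    exact (φ.inner_map_map s x).trans (inner_right_of_mem_orthogonal hs hx)

theorem mem_sphere_inter_orthogonal_sup_iff {S : Submodule ℝ F} (he : ⟪e, e⟫_ℝ = 1)
    (heS : e ∈ S) (x : F) :
    x ∈ sphere (0 : F) 1 ∩ (S ⊔ ℝ ∙ β e)ᗮ ↔
      minkowskiForm e x x = -1 ∧ minkowskiForm e x e = 0 ∧
        (∀ y ∈ S, minkowskiForm e x y = 0) ∧ β x = x := by
  have hxe : minkowskiForm e x e = ⟪x, e⟫_ℝ := by rw [minkowskiForm, he]; ring
  rw [Set.mem_inter_iff, mem_sphere_zero_iff_norm, ← inf_orthogonal, SetLike.mem_coe, mem_inf,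
    mem_orthogonal_singleton_iff_inner_right, hxe, hβ.isSymmetric]
  constructor
  · rintro ⟨hn, hS, hβe⟩
    have h2 : ⟪x, e⟫_ℝ = 0 := inner_left_of_mem_orthogonal heS hS
    refine ⟨?_, h2, fun y hy => ?_, ?_⟩
    · rw [minkowskiForm, h2, real_inner_self_eq_norm_sq, hn]
      ring
    · rw [minkowskiForm, h2, inner_left_of_mem_orthogonal hy hS]
      ring
    · exact hβ.apply_eq_self_of_inner_eq_zero hg h2 (by rw [real_inner_comm, hβe])
  · rintro ⟨h1, h2, h3, h4⟩
    refine ⟨?_, (mem_orthogonal _ _).mpr fun y hy => ?_, by rw [h4, real_inner_comm, h2]⟩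
    · rw [minkowskiForm, h2, real_inner_self_eq_norm_sq] at h1
      exact (pow_eq_one_iff_of_nonneg (norm_nonneg x) two_ne_zero).mp (by linarith)
    · have := h3 y hy
      rw [minkowskiForm, h2, real_inner_comm y x] at this
      linarith

end LinearMap.IsPositive

abbrev toEuclideanSpace : V4 ≃L[ℝ] EuclideanSpace ℝ (Fin 4) := (EuclideanSpace.equiv (Fin 4) ℝ).symm

local notation "ê₀" => toEuclideanSpace e0

local notation "ℰ" => toEuclideanSpace.toLinearEquiv.conj

theorem inner_toEuclideanSpace (x y : V4) :
    ⟪toEuclideanSpace x, toEuclideanSpace y⟫_ℝ = x 0 * y 0 + x 1 * y 1 + x 2 * y 2 + x 3 * y 3 := by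
  simp [PiLp.inner_apply, Fin.sum_univ_four]
  ring

theorem mg_eq_minkowskiForm (x y : V4) :
    mg x y = minkowskiForm ê₀ (toEuclideanSpace x) (toEuclideanSpace y) := by
  simp only [mg, minkowskiForm, inner_toEuclideanSpace]
  simp [e0]
  ring

theorem inn_e0_eq_inner (x y : V4) : inn e0 x y = ⟪toEuclideanSpace x, toEuclideanSpace y⟫_ℝ := by
  simp only [inn, mg, inner_toEuclideanSpace]
  simp [e0]
  ring

theorem inner_toEuclideanSpace_e0_self : ⟪ê₀, ê₀⟫_ℝ = 1 := by
  simp only [inner_toEuclideanSpace]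
  simp [e0]

theorem conj_toEuclideanSpace_apply (f : V4 →ₗ[ℝ] V4) (x : V4) :
    ℰ f (toEuclideanSpace x) = toEuclideanSpace (f x) := by
  rw [LinearEquiv.conj_apply_apply]
  rfl

section

variable {ρ β : V4 →ₗ[ℝ] V4}

theorem IsBoostAt.isPositive (hβ : IsBoostAt e0 β) : (ℰ β).IsPositive := by
  refine ⟨fun x y => ?_, fun x => ?_⟩
  · obtain ⟨x, rfl⟩ := toEuclideanSpace.surjective x
    obtain ⟨y, rfl⟩ := toEuclideanSpace.surjective y
    simpa only [conj_toEuclideanSpace_apply, inn_e0_eq_inner] using hβ.2.1 x y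
  · obtain ⟨x, rfl⟩ := toEuclideanSpace.surjective x
    rw [conj_toEuclideanSpace_apply, RCLike.re_to_real, ← inn_e0_eq_inner]
    rcases eq_or_ne x 0 with rfl | hx
    · simp [inn, mg]
    · exact (hβ.2.2 x hx).le

theorem IsBoostAt.minkowskiForm_conj (hβ : IsBoostAt e0 β) (x y : EuclideanSpace ℝ (Fin 4)) :
    minkowskiForm ê₀ (ℰ β x) (ℰ β y) = minkowskiForm ê₀ x y := by
  obtain ⟨x, rfl⟩ := toEuclideanSpace.surjective x
  obtain ⟨y, rfl⟩ := toEuclideanSpace.surjective y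
  simpa only [conj_toEuclideanSpace_apply, mg_eq_minkowskiForm] using hβ.1.1 x y

theorem IsRotationAt.exists_linearIsometryEquiv (hρ : IsRotationAt e0 ρ) :
    ∃ φ : EuclideanSpace ℝ (Fin 4) ≃ₗᵢ[ℝ] EuclideanSpace ℝ (Fin 4),
      φ.toLinearMap = ℰ ρ ∧ LinearMap.det φ.toLinearMap = 1 := by
  have hf : ∀ x y, ⟪ℰ ρ x, ℰ ρ y⟫_ℝ = ⟪x, y⟫_ℝ :=
    inner_map_map_of_minkowskiForm inner_toEuclideanSpace_e0_self
      (by rw [conj_toEuclideanSpace_apply, hρ.2]) fun x y => by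
        obtain ⟨x, rfl⟩ := toEuclideanSpace.surjective x
        obtain ⟨y, rfl⟩ := toEuclideanSpace.surjective y
        simpa only [conj_toEuclideanSpace_apply, mg_eq_minkowskiForm] using hρ.1.1 x y
  have hinj : Function.Injective (ℰ ρ) := (injective_iff_map_eq_zero _).mpr fun x hx =>
    inner_self_eq_zero.mp (by rw [← hf, hx, inner_zero_left])
  refine ⟨(LinearEquiv.ofInjectiveEndo _ hinj).isometryOfInner hf, rfl, ?_⟩
  change LinearMap.det (ℰ ρ) = 1
  rw [LinearEquiv.conj_apply, LinearMap.comp_assoc, LinearMap.det_conj]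
  exact hρ.1.2.1

variable {φ : EuclideanSpace ℝ (Fin 4) ≃ₗᵢ[ℝ] EuclideanSpace ℝ (Fin 4)}

theorem IsRotationAt.apply_toEuclideanSpace_e0 (hρ : IsRotationAt e0 ρ)
    (hφ : φ.toLinearMap = ℰ ρ) : φ ê₀ = ê₀ :=
  (LinearMap.congr_fun hφ ê₀).trans (by rw [conj_toEuclideanSpace_apply, hρ.2])

theorem IsRotationAt.finrank_fixedSubspace_eq_two (hρ : IsRotationAt e0 ρ)
    (hρ1 : ρ ≠ LinearMap.id) (hφ : φ.toLinearMap = ℰ ρ) (hdet : LinearMap.det φ.toLinearMap = 1) :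
    finrank ℝ φ.fixedSubspace = 2 := by
  have hφ1 : φ ≠ 1 := fun h => hρ1 <| toEuclideanSpace.toLinearEquiv.conj.injective <| by
    rw [← hφ, h, LinearEquiv.conj_id]
    rfl
  have he0 : ê₀ ≠ 0 := fun h => by simpa [h] using inner_toEuclideanSpace_e0_self
  exact φ.finrank_fixedSubspace_eq_two finrank_euclideanSpace_fin hdet hφ1 he0
    (hρ.apply_toEuclideanSpace_e0 hφ)

theorem IsRotationAt.comp_comm_iff_mem_fixedSubspace (hρ : IsRotationAt e0 ρ) (hβ : IsBoostAt e0 β)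
    (hφ : φ.toLinearMap = ℰ ρ) : ρ ∘ₗ β = β ∘ₗ ρ ↔ ℰ β ê₀ ∈ φ.fixedSubspace := by
  rw [← hβ.isPositive.comp_comm_iff_mem_fixedSubspace hβ.minkowskiForm_conj φ
      (hρ.apply_toEuclideanSpace_e0 hφ), hφ, ← LinearEquiv.conj_comp, ← LinearEquiv.conj_comp,
    (LinearEquiv.conj _).injective.eq_iff]

theorem ESet_eq_preimage (hρ : IsRotationAt e0 ρ) (hβ : IsBoostAt e0 β)
    (hφ : φ.toLinearMap = ℰ ρ) :
    ESet ρ β = toEuclideanSpace ⁻¹' (sphere 0 1 ∩ (φ.fixedSubspace ⊔ ℝ ∙ ℰ β ê₀)ᗮ) := by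
  have hfix : ∀ y, toEuclideanSpace y ∈ φ.fixedSubspace ↔ ρ y = y := fun y => by
    rw [φ.mem_fixedSubspace, ← toEuclideanSpace.injective.eq_iff, ← conj_toEuclideanSpace_apply,
      ← hφ]
    rfl
  ext x
  rw [Set.mem_preimage, hβ.isPositive.mem_sphere_inter_orthogonal_sup_iff hβ.minkowskiForm_conj
    inner_toEuclideanSpace_e0_self ((hfix e0).mpr hρ.2)]
  simp only [ESet, Set.mem_ofPred_eq, mg_eq_minkowskiForm, toEuclideanSpace.surjective.forall,
    hfix, conj_toEuclideanSpace_apply, toEuclideanSpace.injective.eq_iff]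

end

/-- For a nontrivial rotation `ρ` and a boost `β` (with respect to `e₀`), the set
`E(ρ,β)` is homeomorphic to the circle `S¹` if `ρ` and `β` commute, and otherwise
equals `{e, -e}` for some time-zero unit vector `e`. -/
theorem ESet_classification
    (ρ β : V4 →ₗ[ℝ] V4) (hρ : IsRotationAt e0 ρ) (hρ1 : ρ ≠ LinearMap.id)
    (hβ : IsBoostAt e0 β) :
    (ρ ∘ₗ β = β ∘ₗ ρ → Nonempty (ESet ρ β ≃ₜ Circle)) ∧
    (ρ ∘ₗ β ≠ β ∘ₗ ρ →
      ∃ e : V4, mg e e = -1 ∧ mg e e0 = 0 ∧ ESet ρ β = {e, -e}) := by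
  obtain ⟨φ, hφ, hdet⟩ := hρ.exists_linearIsometryEquiv
  have hS := hρ.finrank_fixedSubspace_eq_two hρ1 hφ hdet
  have hE := ESet_eq_preimage hρ hβ hφ
  have hK := (φ.fixedSubspace ⊔ ℝ ∙ ℰ β ê₀).finrank_add_finrank_orthogonal
  rw [finrank_euclideanSpace_fin] at hK
  rw [Ne, hρ.comp_comm_iff_mem_fixedSubspace hβ hφ]
  refine ⟨fun h => ?_, fun h => ?_⟩
  · rw [sup_eq_left.mpr ((span_singleton_le_iff_mem _ _).mpr h)] at hK hE
    obtain ⟨Φ⟩ := nonempty_sphere_inter_homeomorph_circle (K := φ.fixedSubspaceᗮ) (by omega)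
    rw [hE]
    exact ⟨(toEuclideanSpace.toHomeomorph.subtype fun _ => Iff.rfl).trans Φ⟩
  · rw [finrank_sup_span_singleton h, hS] at hK
    obtain ⟨v, hv⟩ := exists_sphere_inter_eq_pair (K := (φ.fixedSubspace ⊔ ℝ ∙ ℰ β ê₀)ᗮ) (by omega)
    rw [hv, ← ContinuousLinearEquiv.image_symm_eq_preimage, Set.image_pair, map_neg] at hE
    have hmem : toEuclideanSpace.symm v ∈ ESet ρ β := hE ▸ Set.mem_insert _ _
    exact ⟨_, hmem.1, hmem.2.1, hE⟩
end
end
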